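/- arXiv:2103.00972 — 9 statements merged into one kernel-verified Lean document; each statement's English description precedes it below -/
import Mathlib

section
/- Consider the quadrangle mass-action ODE ẋ = f(x,y) = Σᵢ₌₁⁴ (aᵢ₊₁−aᵢ)κᵢ x^{aᵢ}y^{bᵢ}, ẏ = g(x,y) = Σᵢ₌₁⁴ (bᵢ₊₁−bᵢ)κᵢ x^{aᵢ}y^{bᵢ} (indices mod 4, so a₅=a₁, b₅=b₁) with κ₁,κ₂,κ₃,κ₄ > 0, where the four points (aᵢ,bᵢ) are distinct and do not lie on a line. Let i and j be indices with a_i = min(a₁,a₂,a₃,a₄) and b_j = min(b₁,b₂,b₃,b₄), and assume both of the chains a_i < a_{i+3} < a_{i+1} < a_{i+2} and b_j < b_{j+3} < b_{j+1} < b_{j+2} (indices taken mod 4) are violated. Then there exist real numbers α and β such that, with h(x,y) = x^{−α}y^{−β}, the divergence ∂(hf)/∂x + ∂(hg)/∂y is negative at every point (x,y) ∈ ℝ₊². -/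
/-!
With `h = x^(-α) y^(-β)`, the divergence of `h • (f, g)` is
`∑ₖ κₖ [(aₖ₊₁ - aₖ)(aₖ - α) x^(aₖ-α-1) y^(bₖ-β) + (bₖ₊₁ - bₖ)(bₖ - β) x^(aₖ-α) y^(bₖ-β-1)]`,
so it is negative as soon as every step `aₖ → aₖ₊₁` of the cycle moves weakly towards `α`,
every step `bₖ → bₖ₊₁` towards `β`, and some step of `a` strictly. Such an `α` exists
when the chain `aᵢ < aᵢ₊₃ < aᵢ₊₁ < aᵢ₊₂` fails (one of `min(aᵢ₊₁, aᵢ₊₂)`, `min(aᵢ₊₁, aᵢ₊₃)`,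
`min(aᵢ₊₂, aᵢ₊₃)` works). Strictness comes from the identity
`∑ₖ (aₖ₊₁ - aₖ)(aₖ - α) = -½ ∑ₖ (aₖ₊₁ - aₖ)²`, which is negative unless all `aₖ` agree,
i.e. unless the four points lie on a vertical line.
-/

open Finset Real Filter Topology

section CyclicSequence

variable {n : ℕ} [NeZero n]

def StepsToward (a : Fin n → ℝ) (α : ℝ) : Prop :=
  ∀ k, (a (k + 1) - a k) * (a k - α) ≤ 0

theorem sum_sub_mul_sub_eq_neg_sum_sq_div_two (a : Fin n → ℝ) (α : ℝ) :
    ∑ k, (a (k + 1) - a k) * (a k - α) = -(∑ k, (a (k + 1) - a k) ^ 2) / 2 := by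
  set g : Fin n → ℝ := fun k => a k ^ 2 / 2 - α * a k
  have htelescope : ∑ k, ((a (k + 1) - a k) * (a k - α) + (a (k + 1) - a k) ^ 2 / 2) = 0 :=
    calc _ = ∑ k, (g (k + 1) - g k) := sum_congr rfl fun k _ => by simp only [g]; ring
      _ = 0 := by rw [sum_sub_distrib]; exact sub_eq_zero.2 (Equiv.sum_comp (Equiv.addRight 1) g)
  rw [sum_add_distrib, ← sum_div] at htelescope
  linarith

open Fin.NatCast in
theorem apply_eq_apply_zero_of_forall_add_one {β : Type*} {a : Fin n → β}
    (h : ∀ k, a (k + 1) = a k) (k : Fin n) : a k = a 0 := by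
  have key (m : ℕ) : a (m : Fin n) = a 0 := by
    induction m with
    | zero => simp
    | succ m ih => rw [Nat.cast_succ, h, ih]
  simpa using key k

theorem StepsToward.exists_neg {a : Fin n → ℝ} {α : ℝ} (h : StepsToward a α)
    (hne : ¬ ∀ k, a k = a 0) : ∃ k, (a (k + 1) - a k) * (a k - α) < 0 := by
  by_contra! hzero
  have hsum : ∑ k, (a (k + 1) - a k) ^ 2 = 0 := by
    have := sum_sub_mul_sub_eq_neg_sum_sq_div_two a α
    rw [sum_eq_zero fun k _ => le_antisymm (h k) (hzero k)] at this
    linarith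
  rw [sum_eq_zero_iff_of_nonneg fun k _ => sq_nonneg _] at hsum
  exact hne (apply_eq_apply_zero_of_forall_add_one fun k => by
    simpa [sub_eq_zero] using hsum k (mem_univ k))

end CyclicSequence

theorem exists_four_cycle_stepsToward {p q r s : ℝ} (hq : p ≤ q) (hr : p ≤ r) (hs : p ≤ s)
    (h : s ≤ p ∨ r ≤ q ∨ q ≤ s) :
    ∃ α, (q - p) * (p - α) ≤ 0 ∧ (r - q) * (q - α) ≤ 0 ∧
      (s - r) * (r - α) ≤ 0 ∧ (p - s) * (s - α) ≤ 0 := by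
  rcases h with h | h | h <;> [use min q r; use min q s; use min r s] <;>
    rw [min_def] <;> split_ifs <;> refine ⟨?_, ?_, ?_, ?_⟩ <;>
    nlinarith [sq_nonneg (q - r), sq_nonneg (q - s), sq_nonneg (r - s)]

theorem exists_stepsToward (a : Fin 4 → ℝ) (i : Fin 4) (hi : ∀ k, a i ≤ a k)
    (hc : ¬ (a i < a (i + 3) ∧ a (i + 3) < a (i + 1) ∧ a (i + 1) < a (i + 2))) :
    ∃ α, StepsToward a α := by
  have hfail : a (i + 3) ≤ a i ∨ a (i + 2) ≤ a (i + 1) ∨ a (i + 1) ≤ a (i + 3) := by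
    by_contra! h
    exact hc ⟨h.1, h.2.2, h.2.1⟩
  obtain ⟨α, h0, h1, h2, h3⟩ := exists_four_cycle_stepsToward (hi _) (hi _) (hi _) hfail
  refine ⟨α, fun k => ?_⟩
  obtain ⟨m, rfl⟩ : ∃ m, k = i + m := ⟨k - i, (add_sub_cancel i k).symm⟩
  fin_cases m <;> simpa [add_assoc]

theorem collinear_range_of_fst_eq {ι : Type*} {a b : ι → ℝ} {c : ℝ} (h : ∀ k, a k = c) :
    Collinear ℝ (Set.range fun k => (a k, b k)) := by
  rw [collinear_iff_exists_forall_eq_smul_vadd]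
  refine ⟨(c, 0), (0, 1), ?_⟩
  rintro _ ⟨k, rfl⟩
  exact ⟨b k, by simp [h k]⟩

section Divergence

variable {ι : Type*} [Fintype ι] (κ u v a b : ι → ℝ) (α β : ℝ) {x y : ℝ}

noncomputable def dulacDivergence (x y : ℝ) : ℝ :=
  ∑ k, κ k * (u k * (a k - α) * (x ^ (a k - α - 1) * y ^ (b k - β))
    + v k * (b k - β) * (x ^ (a k - α) * y ^ (b k - β - 1)))

theorem rpow_neg_mul_rpow_neg_mul_sum (c : ι → ℝ) (hx : 0 < x) (hy : 0 < y) :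
    x ^ (-α) * y ^ (-β) * ∑ k, c k * x ^ a k * y ^ b k
      = ∑ k, c k * x ^ (a k - α) * y ^ (b k - β) := by
  rw [mul_sum]
  refine sum_congr rfl fun k _ => ?_
  rw [rpow_sub hx, rpow_sub hy, rpow_neg hx.le, rpow_neg hy.le]
  ring

theorem deriv_add_deriv_eq_dulacDivergence (hx : 0 < x) (hy : 0 < y) :
    deriv (fun x' => x' ^ (-α) * y ^ (-β) * ∑ k, u k * κ k * x' ^ a k * y ^ b k) x
      + deriv (fun y' => x ^ (-α) * y' ^ (-β) * ∑ k, v k * κ k * x ^ a k * y' ^ b k) y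
      = dulacDivergence κ u v a b α β x y := by
  have hX : HasDerivAt (fun x' => x' ^ (-α) * y ^ (-β) * ∑ k, u k * κ k * x' ^ a k * y ^ b k)
      (∑ k, u k * κ k * ((a k - α) * x ^ (a k - α - 1)) * y ^ (b k - β)) x := by
    refine (HasDerivAt.fun_sum fun k _ =>
      ((hasDerivAt_rpow_const (Or.inl hx.ne')).const_mul _).mul_const _).congr_of_eventuallyEq ?_
    filter_upwards [eventually_gt_nhds hx] with t ht
    exact rpow_neg_mul_rpow_neg_mul_sum a b α β _ ht hy
  have hY : HasDerivAt (fun y' => x ^ (-α) * y' ^ (-β) * ∑ k, v k * κ k * x ^ a k * y' ^ b k)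
      (∑ k, v k * κ k * x ^ (a k - α) * ((b k - β) * y ^ (b k - β - 1))) y := by
    refine (HasDerivAt.fun_sum fun k _ =>
      (hasDerivAt_rpow_const (Or.inl hy.ne')).const_mul _).congr_of_eventuallyEq ?_
    filter_upwards [eventually_gt_nhds hy] with t ht
    exact rpow_neg_mul_rpow_neg_mul_sum a b α β _ hx ht
  rw [hX.deriv, hY.deriv, dulacDivergence, ← sum_add_distrib]
  exact sum_congr rfl fun k _ => by ring

variable {κ u v a b α β}

theorem dulacDivergence_neg (hκ : ∀ k, 0 < κ k) (ha : ∀ k, u k * (a k - α) ≤ 0)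
    (ha' : ∃ k, u k * (a k - α) < 0) (hb : ∀ k, v k * (b k - β) ≤ 0) (hx : 0 < x) (hy : 0 < y) :
    dulacDivergence κ u v a b α β x y < 0 := by
  have hbk (k : ι) : v k * (b k - β) * (x ^ (a k - α) * y ^ (b k - β - 1)) ≤ 0 :=
    mul_nonpos_of_nonpos_of_nonneg (hb k) (by positivity)
  refine sum_neg' (fun k _ => mul_nonpos_of_nonneg_of_nonpos (hκ k).le ?_) ?_
  · exact add_nonpos (mul_nonpos_of_nonpos_of_nonneg (ha k) (by positivity)) (hbk k)
  · obtain ⟨k, hk⟩ := ha'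
    exact ⟨k, mem_univ k, mul_neg_of_pos_of_neg (hκ k)
      (add_neg_of_neg_of_nonpos (mul_neg_of_neg_of_pos hk (by positivity)) (hbk k))⟩

end Divergence

theorem quadrangle_dulac_general
    (a b κ : Fin 4 → ℝ) (hκ : ∀ k, 0 < κ k)
    (hline : ¬ Collinear ℝ (Set.range (fun k => ((a k, b k) : ℝ × ℝ))))
    (i j : Fin 4)
    (hi : ∀ k, a i ≤ a k) (hj : ∀ k, b j ≤ b k)
    (hca : ¬ (a i < a (i + 3) ∧ a (i + 3) < a (i + 1) ∧ a (i + 1) < a (i + 2)))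
    (hcb : ¬ (b j < b (j + 3) ∧ b (j + 3) < b (j + 1) ∧ b (j + 1) < b (j + 2))) :
    ∃ α β : ℝ, ∀ x y : ℝ, 0 < x → 0 < y →
      deriv (fun x' : ℝ => x' ^ (-α) * y ^ (-β) *
          (∑ k : Fin 4, (a (k + 1) - a k) * κ k * x' ^ (a k) * y ^ (b k))) x
      + deriv (fun y' : ℝ => x ^ (-α) * y' ^ (-β) *
          (∑ k : Fin 4, (b (k + 1) - b k) * κ k * x ^ (a k) * y' ^ (b k))) y < 0 := by
  obtain ⟨α, hα⟩ := exists_stepsToward a i hi hca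
  obtain ⟨β, hβ⟩ := exists_stepsToward b j hj hcb
  have ha_nonconst : ¬ ∀ k, a k = a 0 := fun h => hline (collinear_range_of_fst_eq h)
  exact ⟨α, β, fun x y hx hy =>
    (deriv_add_deriv_eq_dulacDivergence κ (fun k => a (k + 1) - a k) (fun k => b (k + 1) - b k)
      a b α β hx hy).trans_lt (dulacDivergence_neg hκ hα (hα.exists_neg ha_nonconst) hβ hx hy)⟩

/-- Bendixson–Dulac function for the quadrangle mass-action system.
If the two cyclic chains are violated for the minimizing indices, then there are
exponents α, β such that the divergence of x^(−α)y^(−β)·(f,g) is negative on ℝ₊². -/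
theorem quadrangle_dulac
    (a b κ : Fin 4 → ℝ) (hκ : ∀ k, 0 < κ k)
    (hdist : Function.Injective (fun k => ((a k, b k) : ℝ × ℝ)))
    (hline : ¬ Collinear ℝ (Set.range (fun k => ((a k, b k) : ℝ × ℝ))))
    (i j : Fin 4)
    (hi : ∀ k, a i ≤ a k) (hj : ∀ k, b j ≤ b k)
    (hca : ¬ (a i < a (i + 3) ∧ a (i + 3) < a (i + 1) ∧ a (i + 1) < a (i + 2)))
    (hcb : ¬ (b j < b (j + 3) ∧ b (j + 3) < b (j + 1) ∧ b (j + 1) < b (j + 2))) :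
    ∃ α β : ℝ, ∀ x y : ℝ, 0 < x → 0 < y →
      deriv (fun x' : ℝ => x' ^ (-α) * y ^ (-β) *
          (∑ k : Fin 4, (a (k + 1) - a k) * κ k * x' ^ (a k) * y ^ (b k))) x
      + deriv (fun y' : ℝ => x ^ (-α) * y' ^ (-β) *
          (∑ k : Fin 4, (b (k + 1) - b k) * κ k * x ^ (a k) * y' ^ (b k))) y < 0 :=
  quadrangle_dulac_general a b κ hκ hline i j hi hj hca hcb
end

section
/- Consider the chain mass-action ODE ẋ = (a₂−a₁)κ₁x^{a₁}y^{b₁} + (a₃−a₂)κ₂x^{a₂}y^{b₂} + (a₄−a₃)κ₃x^{a₃}y^{b₃}, ẏ = (b₂−b₁)κ₁x^{a₁}y^{b₁} + (b₃−b₂)κ₂x^{a₂}y^{b₂} + (b₄−b₃)κ₃x^{a₃}y^{b₃} with κ₁,κ₂,κ₃ > 0. Define Δ(ijk) = det(P_j−P_i, P_k−P_i) for P_m = (a_m,b_m), and h₁ = Δ(243), h₂ = Δ(134), h₃ = Δ(142). Assume h₁ ≠ 0. Then (x̄,ȳ) ∈ ℝ₊² is an equilibrium of the system if and only if (h₁+h₂+h₃)κ₁x̄^{a₁}ȳ^{b₁}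 = h₁κ₃x̄^{a₃}ȳ^{b₃} and (h₁+h₂)κ₁x̄^{a₁}ȳ^{b₁} = h₁κ₂x̄^{a₂}ȳ^{b₂}. -/
/-!
Write `u, v, w` for the three reaction rates `κᵢ x^aᵢ y^bᵢ`. The equilibrium equations are two
linear equations `E₁ = E₂ = 0` in `(u, v, w)`, and the two binomials `(h₁+h₂+h₃) u - h₁ w` and
`(h₁+h₂) u - h₁ v` are the images of `(E₁, E₂)` under a `2 × 2` matrix built from `P₂, P₃, P₄`
whose determinant is `h₁`. Since `h₁ ≠ 0`, both pairs vanish together.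
-/

variable {K : Type*} [Field K]

theorem and_eq_zero_iff_of_det_ne_zero {a b c d p q : K} (hdet : a * d - b * c ≠ 0) :
    (a * p + b * q = 0 ∧ c * p + d * q = 0) ↔ (p = 0 ∧ q = 0) := by
  constructor
  · rintro ⟨e₁, e₂⟩
    have hp : (a * d - b * c) * p = 0 := by linear_combination d * e₁ - b * e₂
    have hq : (a * d - b * c) * q = 0 := by linear_combination a * e₂ - c * e₁
    exact ⟨(mul_eq_zero.1 hp).resolve_left hdet, (mul_eq_zero.1 hq).resolve_left hdet⟩
  · rintro ⟨rfl, rfl⟩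
    simp

theorem chain_linear_system_iff (a₁ b₁ a₂ b₂ a₃ b₃ a₄ b₄ u v w h₁ h₂ h₃ : K)
    (hh₁ : h₁ = (a₄ - a₂) * (b₃ - b₂) - (b₄ - b₂) * (a₃ - a₂))
    (hh₂ : h₂ = (a₃ - a₁) * (b₄ - b₁) - (b₃ - b₁) * (a₄ - a₁))
    (hh₃ : h₃ = (a₄ - a₁) * (b₂ - b₁) - (b₄ - b₁) * (a₂ - a₁))
    (hne : h₁ ≠ 0) :
    ((a₂ - a₁) * u + (a₃ - a₂) * v + (a₄ - a₃) * w = 0 ∧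
        (b₂ - b₁) * u + (b₃ - b₂) * v + (b₄ - b₃) * w = 0) ↔
      ((h₁ + h₂ + h₃) * u = h₁ * w ∧ (h₁ + h₂) * u = h₁ * v) := by
  set E₁ := (a₂ - a₁) * u + (a₃ - a₂) * v + (a₄ - a₃) * w
  set E₂ := (b₂ - b₁) * u + (b₃ - b₂) * v + (b₄ - b₃) * w
  have hG₁ : (h₁ + h₂ + h₃) * u - h₁ * w = -(b₃ - b₂) * E₁ + (a₃ - a₂) * E₂ := by
    subst hh₁ hh₂ hh₃; ring
  have hG₂ : (h₁ + h₂) * u - h₁ * v = (b₄ - b₃) * E₁ + -(a₄ - a₃) * E₂ := by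
    subst hh₁ hh₂ hh₃; ring
  have hdet : -(b₃ - b₂) * -(a₄ - a₃) - (a₃ - a₂) * (b₄ - b₃) ≠ 0 := by
    rw [hh₁] at hne; convert hne using 1; ring
  rw [← sub_eq_zero (a := (h₁ + h₂ + h₃) * u), hG₁, ← sub_eq_zero (a := (h₁ + h₂) * u), hG₂,
    and_eq_zero_iff_of_det_ne_zero hdet]

theorem chain_equilibrium_binomial_general
    (a₁ b₁ a₂ b₂ a₃ b₃ a₄ b₄ : ℝ) (κ₁ κ₂ κ₃ : ℝ)
    (h₁ h₂ h₃ : ℝ)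
    (hh₁ : h₁ = (a₄ - a₂) * (b₃ - b₂) - (b₄ - b₂) * (a₃ - a₂))
    (hh₂ : h₂ = (a₃ - a₁) * (b₄ - b₁) - (b₃ - b₁) * (a₄ - a₁))
    (hh₃ : h₃ = (a₄ - a₁) * (b₂ - b₁) - (b₄ - b₁) * (a₂ - a₁))
    (hne : h₁ ≠ 0) :
    ∀ x y : ℝ, 0 < x → 0 < y →
      (((a₂ - a₁) * κ₁ * x ^ a₁ * y ^ b₁ + (a₃ - a₂) * κ₂ * x ^ a₂ * y ^ b₂
          + (a₄ - a₃) * κ₃ * x ^ a₃ * y ^ b₃ = 0 ∧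
        (b₂ - b₁) * κ₁ * x ^ a₁ * y ^ b₁ + (b₃ - b₂) * κ₂ * x ^ a₂ * y ^ b₂
          + (b₄ - b₃) * κ₃ * x ^ a₃ * y ^ b₃ = 0) ↔
       ((h₁ + h₂ + h₃) * (κ₁ * x ^ a₁ * y ^ b₁) = h₁ * (κ₃ * x ^ a₃ * y ^ b₃) ∧
        (h₁ + h₂) * (κ₁ * x ^ a₁ * y ^ b₁) = h₁ * (κ₂ * x ^ a₂ * y ^ b₂))) := by
  intro x y _ _
  simpa only [mul_assoc] using chain_linear_system_iff a₁ b₁ a₂ b₂ a₃ b₃ a₄ b₄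
    (κ₁ * x ^ a₁ * y ^ b₁) (κ₂ * x ^ a₂ * y ^ b₂) (κ₃ * x ^ a₃ * y ^ b₃) h₁ h₂ h₃ hh₁ hh₂ hh₃ hne

/-- Equilibrium equations of the chain of three reactions in binomial form.
Here h₁ = Δ(243), h₂ = Δ(134), h₃ = Δ(142) with Δ(ijk) = det(P_j−P_i, P_k−P_i). -/
theorem chain_equilibrium_binomial
    (a₁ b₁ a₂ b₂ a₃ b₃ a₄ b₄ : ℝ) (κ₁ κ₂ κ₃ : ℝ)
    (hκ₁ : 0 < κ₁) (hκ₂ : 0 < κ₂) (hκ₃ : 0 < κ₃)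
    (h₁ h₂ h₃ : ℝ)
    (hh₁ : h₁ = (a₄ - a₂) * (b₃ - b₂) - (b₄ - b₂) * (a₃ - a₂))
    (hh₂ : h₂ = (a₃ - a₁) * (b₄ - b₁) - (b₃ - b₁) * (a₄ - a₁))
    (hh₃ : h₃ = (a₄ - a₁) * (b₂ - b₁) - (b₄ - b₁) * (a₂ - a₁))
    (hne : h₁ ≠ 0) :
    ∀ x y : ℝ, 0 < x → 0 < y →
      (((a₂ - a₁) * κ₁ * x ^ a₁ * y ^ b₁ + (a₃ - a₂) * κ₂ * x ^ a₂ * y ^ b₂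
          + (a₄ - a₃) * κ₃ * x ^ a₃ * y ^ b₃ = 0 ∧
        (b₂ - b₁) * κ₁ * x ^ a₁ * y ^ b₁ + (b₃ - b₂) * κ₂ * x ^ a₂ * y ^ b₂
          + (b₄ - b₃) * κ₃ * x ^ a₃ * y ^ b₃ = 0) ↔
       ((h₁ + h₂ + h₃) * (κ₁ * x ^ a₁ * y ^ b₁) = h₁ * (κ₃ * x ^ a₃ * y ^ b₃) ∧
        (h₁ + h₂) * (κ₁ * x ^ a₁ * y ^ b₁) = h₁ * (κ₂ * x ^ a₂ * y ^ b₂))) :=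
  chain_equilibrium_binomial_general a₁ b₁ a₂ b₂ a₃ b₃ a₄ b₄ κ₁ κ₂ κ₃ h₁ h₂ h₃ hh₁ hh₂ hh₃ hne
end

section
/- Consider the chain mass-action ODE ẋ = (a₂−a₁)κ₁x^{a₁}y^{b₁} + (a₃−a₂)κ₂x^{a₂}y^{b₂} + (a₄−a₃)κ₃x^{a₃}y^{b₃}, ẏ = (b₂−b₁)κ₁x^{a₁}y^{b₁} + (b₃−b₂)κ₂x^{a₂}y^{b₂} + (b₄−b₃)κ₃x^{a₃}y^{b₃} with κ₁,κ₂,κ₃ > 0, where (a₁,b₁), (a₂,b₂), (a₃,b₃) do not lie on a line. With h₁ = Δ(243), h₂ = Δ(134), h₃ = Δ(142) (where Δ(ijk) = det(P_j−P_i, P_k−P_i) and P_m = (a_m,b_m)), the following are equivalent: (a) there exists a positive equilibrium; (b) there exists exactly one positive equilibrium; (c) sgn(h₁) = sgn(h₁+h₂) = sgn(h₁+h₂+h₃) ≠ 0. In particular, the existence of a positive equilibrium does not depend on the values of κ₁, κ₂, κ₃. -/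
/-!
Write `m_i = κ_i x^{a_i} y^{b_i} > 0`; the vector field is `∑ m_i (P_{i+1} - P_i)`. Since
`P₁, P₂, P₃` are not collinear, the reaction vectors `P₂ - P₁, P₃ - P₂` are independent and the
relations among the three reaction vectors are the multiples of `(h₁, h₁ + h₂, h₁ + h₂ + h₃)`,
whose last entry is `-Δ(123) ≠ 0`. So a point is an equilibrium iff `m₁ : m₂ : m₃` is this ratio,
i.e. iff the two monomials `m₁ / m₃`, `m₂ / m₃` take prescribed values, which are positive exactly
under the sign condition. In logarithmic coordinates these two equations form a linear system with
determinant `Δ(123) ≠ 0`, hence have exactly one solution whenever their right-hand sides are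
positive.
-/

open Real

theorem det_ne_zero_of_not_collinear {p q r : ℝ × ℝ} (h : ¬Collinear ℝ {p, q, r}) :
    (q - p).1 * (r - p).2 - (q - p).2 * (r - p).1 ≠ 0 := by
  intro hdet
  simp only [Prod.fst_sub, Prod.snd_sub] at hdet
  have hpq : (q.1 - p.1) ^ 2 + (q.2 - p.2) ^ 2 ≠ 0 := fun h0 =>
    ne₁₂_of_not_collinear h (Prod.ext (by nlinarith) (by nlinarith))
  -- `lineMap p q t` is the orthogonal projection of `r` to the line `pq`
  set t := ((r.1 - p.1) * (q.1 - p.1) + (r.2 - p.2) * (q.2 - p.2)) /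
    ((q.1 - p.1) ^ 2 + (q.2 - p.2) ^ 2)
  have hr : AffineMap.lineMap p q t = r := by
    ext <;> simp only [AffineMap.lineMap_apply, t, vsub_eq_sub, vadd_eq_add, Prod.fst_add,
      Prod.snd_add, Prod.smul_fst, Prod.smul_snd, Prod.fst_sub, Prod.snd_sub, smul_eq_mul] <;>
      field_simp
    · linear_combination (q.2 - p.2) * hdet
    · linear_combination -(q.1 - p.1) * hdet
  rw [Set.pair_comm, Set.insert_comm] at h
  exact h (collinear_insert_of_mem_affineSpan_pair
    (hr ▸ AffineMap.lineMap_mem_affineSpan_pair t p q))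

theorem eq_zero_of_smul_add_smul_eq_zero {u v : ℝ × ℝ} (huv : u.1 * v.2 - u.2 * v.1 ≠ 0)
    {α β : ℝ} (h : α • u + β • v = 0) : α = 0 ∧ β = 0 := by
  obtain ⟨h₁, h₂⟩ := Prod.ext_iff.1 h
  simp only [Prod.fst_add, Prod.snd_add, Prod.smul_fst, Prod.smul_snd, smul_eq_mul,
    Prod.fst_zero, Prod.snd_zero] at h₁ h₂
  have hα : α * (u.1 * v.2 - u.2 * v.1) = 0 := by linear_combination v.2 * h₁ - v.1 * h₂
  have hβ : β * (u.1 * v.2 - u.2 * v.1) = 0 := by linear_combination u.1 * h₂ - u.2 * h₁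
  exact ⟨(mul_eq_zero.1 hα).resolve_right huv, (mul_eq_zero.1 hβ).resolve_right huv⟩

theorem smul_add_smul_add_smul_eq_zero_iff {u v w : ℝ × ℝ} {k₁ k₂ k₃ : ℝ}
    (huv : u.1 * v.2 - u.2 * v.1 ≠ 0) (hk : k₁ • u + k₂ • v + k₃ • w = 0) (hk₃ : k₃ ≠ 0)
    (m₁ m₂ m₃ : ℝ) :
    m₁ • u + m₂ • v + m₃ • w = 0 ↔ m₁ * k₃ = m₃ * k₁ ∧ m₂ * k₃ = m₃ * k₂ := by
  constructor
  · intro hm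
    have : (m₁ * k₃ - m₃ * k₁) • u + (m₂ * k₃ - m₃ * k₂) • v = 0 := by
      linear_combination (norm := module) k₃ • hm - m₃ • hk
    obtain ⟨h₁, h₂⟩ := eq_zero_of_smul_add_smul_eq_zero huv this
    exact ⟨sub_eq_zero.1 h₁, sub_eq_zero.1 h₂⟩
  · rintro ⟨h₁, h₂⟩
    have : k₃ • (m₁ • u + m₂ • v + m₃ • w) = 0 := by
      linear_combination (norm := module) m₃ • hk + h₁ • u + h₂ • v
    exact (smul_eq_zero.1 this).resolve_left hk₃

theorem linear_system_iff_of_det_ne_zero {a b c d U V X Y : ℝ} (h : a * d - b * c ≠ 0) :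
    a * X + b * Y = U ∧ c * X + d * Y = V ↔
      X = (d * U - b * V) / (a * d - b * c) ∧ Y = (a * V - c * U) / (a * d - b * c) := by
  rw [eq_div_iff h, eq_div_iff h]
  constructor
  · rintro ⟨h₁, h₂⟩
    exact ⟨by linear_combination d * h₁ - b * h₂, by linear_combination a * h₂ - c * h₁⟩
  · rintro ⟨hX, hY⟩
    exact ⟨mul_right_cancel₀ h (by linear_combination a * hX + b * hY),
      mul_right_cancel₀ h (by linear_combination c * hX + d * hY)⟩

noncomputable def rpowMonomial (e p : ℝ × ℝ) : ℝ := p.1 ^ e.1 * p.2 ^ e.2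

section rpowMonomial

variable {p : ℝ × ℝ}

theorem rpowMonomial_pos (hx : 0 < p.1) (hy : 0 < p.2) (e : ℝ × ℝ) : 0 < rpowMonomial e p :=
  mul_pos (rpow_pos_of_pos hx _) (rpow_pos_of_pos hy _)

theorem rpowMonomial_sub (hx : 0 < p.1) (hy : 0 < p.2) (e f : ℝ × ℝ) :
    rpowMonomial (e - f) p = rpowMonomial e p / rpowMonomial f p := by
  simp only [rpowMonomial, Prod.fst_sub, Prod.snd_sub, rpow_sub hx, rpow_sub hy, div_mul_div_comm]

theorem rpowMonomial_eq_iff (hx : 0 < p.1) (hy : 0 < p.2) (e : ℝ × ℝ) {c : ℝ} (hc : 0 < c) :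
    rpowMonomial e p = c ↔ e.1 * log p.1 + e.2 * log p.2 = log c := by
  rw [← log_injOn_pos.eq_iff (rpowMonomial_pos hx hy e) hc, rpowMonomial,
    log_mul (rpow_pos_of_pos hx _).ne' (rpow_pos_of_pos hy _).ne', log_rpow hx, log_rpow hy]

end rpowMonomial

theorem existsUnique_rpowMonomial_eq {e f : ℝ × ℝ} (hef : e.1 * f.2 - e.2 * f.1 ≠ 0) {c d : ℝ}
    (hc : 0 < c) (hd : 0 < d) :
    ∃! p : ℝ × ℝ, 0 < p.1 ∧ 0 < p.2 ∧ rpowMonomial e p = c ∧ rpowMonomial f p = d := by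
  set X := (f.2 * log c - e.2 * log d) / (e.1 * f.2 - e.2 * f.1)
  set Y := (e.1 * log d - f.1 * log c) / (e.1 * f.2 - e.2 * f.1)
  have key : ∀ p : ℝ × ℝ, 0 < p.1 → 0 < p.2 →
      (rpowMonomial e p = c ∧ rpowMonomial f p = d ↔ p = (exp X, exp Y)) := by
    intro p hx hy
    rw [rpowMonomial_eq_iff hx hy e hc, rpowMonomial_eq_iff hx hy f hd,
      linear_system_iff_of_det_ne_zero hef, Prod.ext_iff, ← exp_eq_exp, exp_log hx,
      ← exp_eq_exp (x := log p.2), exp_log hy]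
  refine ⟨(exp X, exp Y), ⟨exp_pos X, exp_pos Y, (key _ (exp_pos X) (exp_pos Y)).2 rfl⟩, ?_⟩
  rintro p ⟨hx, hy, hp⟩
  exact (key p hx hy).1 hp

theorem Real.sign_eq_sign_eq_sign_ne_zero_iff {a b c : ℝ} :
    sign a = sign b ∧ sign b = sign c ∧ sign a ≠ 0 ↔ 0 < a / c ∧ 0 < b / c := by
  rcases lt_trichotomy a 0 with ha | rfl | ha <;> rcases lt_trichotomy b 0 with hb | rfl | hb <;>
    rcases lt_trichotomy c 0 with hc | rfl | hc <;>
    simp only [sign_of_neg, sign_of_pos, sign_zero, div_pos_iff, *] <;> norm_num <;> grind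

def IsChainEquilibrium (P₁ P₂ P₃ P₄ : ℝ × ℝ) (κ₁ κ₂ κ₃ : ℝ) (p : ℝ × ℝ) : Prop :=
  0 < p.1 ∧ 0 < p.2 ∧
    (P₂.1 - P₁.1) * κ₁ * p.1 ^ P₁.1 * p.2 ^ P₁.2 + (P₃.1 - P₂.1) * κ₂ * p.1 ^ P₂.1 * p.2 ^ P₂.2
      + (P₄.1 - P₃.1) * κ₃ * p.1 ^ P₃.1 * p.2 ^ P₃.2 = 0 ∧
    (P₂.2 - P₁.2) * κ₁ * p.1 ^ P₁.1 * p.2 ^ P₁.2 + (P₃.2 - P₂.2) * κ₂ * p.1 ^ P₂.1 * p.2 ^ P₂.2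
      + (P₄.2 - P₃.2) * κ₃ * p.1 ^ P₃.1 * p.2 ^ P₃.2 = 0

section IsChainEquilibrium

variable {P₁ P₂ P₃ P₄ : ℝ × ℝ} {κ₁ κ₂ κ₃ k₁ k₂ k₃ : ℝ}

theorem isChainEquilibrium_iff_smul {p : ℝ × ℝ} :
    IsChainEquilibrium P₁ P₂ P₃ P₄ κ₁ κ₂ κ₃ p ↔ 0 < p.1 ∧ 0 < p.2 ∧
      (κ₁ * rpowMonomial P₁ p) • (P₂ - P₁) + (κ₂ * rpowMonomial P₂ p) • (P₃ - P₂)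
        + (κ₃ * rpowMonomial P₃ p) • (P₄ - P₃) = 0 := by
  simp only [IsChainEquilibrium, rpowMonomial, Prod.ext_iff, Prod.fst_add, Prod.snd_add,
    Prod.smul_fst, Prod.smul_snd, Prod.fst_sub, Prod.snd_sub, smul_eq_mul, Prod.fst_zero,
    Prod.snd_zero]
  constructor <;> rintro ⟨hx, hy, h₁, h₂⟩ <;>
    exact ⟨hx, hy, by linear_combination h₁, by linear_combination h₂⟩

theorem isChainEquilibrium_iff (hκ₁ : 0 < κ₁) (hκ₂ : 0 < κ₂) (hP : ¬Collinear ℝ {P₁, P₂, P₃})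
    (hk : k₁ • (P₂ - P₁) + k₂ • (P₃ - P₂) + k₃ • (P₄ - P₃) = 0) (hk₃ : k₃ ≠ 0) {p : ℝ × ℝ} :
    IsChainEquilibrium P₁ P₂ P₃ P₄ κ₁ κ₂ κ₃ p ↔ 0 < p.1 ∧ 0 < p.2 ∧
      rpowMonomial (P₁ - P₃) p = κ₃ / κ₁ * (k₁ / k₃) ∧
      rpowMonomial (P₂ - P₃) p = κ₃ / κ₂ * (k₂ / k₃) := by
  have huv : (P₂ - P₁).1 * (P₃ - P₂).2 - (P₂ - P₁).2 * (P₃ - P₂).1 ≠ 0 := by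
    convert det_ne_zero_of_not_collinear hP using 1; simp only [Prod.fst_sub, Prod.snd_sub]; ring
  rw [isChainEquilibrium_iff_smul]
  refine and_congr_right fun hx => and_congr_right fun hy => ?_
  rw [smul_add_smul_add_smul_eq_zero_iff huv hk hk₃, rpowMonomial_sub hx hy,
    rpowMonomial_sub hx hy]
  have hm₃ := rpowMonomial_pos hx hy P₃
  apply and_congr <;> field_simp

theorem existsUnique_isChainEquilibrium (hκ₁ : 0 < κ₁) (hκ₂ : 0 < κ₂) (hκ₃ : 0 < κ₃)
    (hP : ¬Collinear ℝ {P₁, P₂, P₃}) (hk : k₁ • (P₂ - P₁) + k₂ • (P₃ - P₂) + k₃ • (P₄ - P₃) = 0)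
    (hk₃ : k₃ ≠ 0) (h₁ : 0 < k₁ / k₃) (h₂ : 0 < k₂ / k₃) :
    ∃! p, IsChainEquilibrium P₁ P₂ P₃ P₄ κ₁ κ₂ κ₃ p := by
  have hD : (P₁ - P₃).1 * (P₂ - P₃).2 - (P₁ - P₃).2 * (P₂ - P₃).1 ≠ 0 := by
    convert det_ne_zero_of_not_collinear hP using 1; simp only [Prod.fst_sub, Prod.snd_sub]; ring
  simp_rw [isChainEquilibrium_iff hκ₁ hκ₂ hP hk hk₃]
  exact existsUnique_rpowMonomial_eq hD (mul_pos (div_pos hκ₃ hκ₁) h₁)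
    (mul_pos (div_pos hκ₃ hκ₂) h₂)

theorem exists_isChainEquilibrium_iff (hκ₁ : 0 < κ₁) (hκ₂ : 0 < κ₂) (hκ₃ : 0 < κ₃)
    (hP : ¬Collinear ℝ {P₁, P₂, P₃}) (hk : k₁ • (P₂ - P₁) + k₂ • (P₃ - P₂) + k₃ • (P₄ - P₃) = 0)
    (hk₃ : k₃ ≠ 0) :
    (∃ p, IsChainEquilibrium P₁ P₂ P₃ P₄ κ₁ κ₂ κ₃ p) ↔ 0 < k₁ / k₃ ∧ 0 < k₂ / k₃ := by
  refine ⟨?_, fun ⟨h₁, h₂⟩ => (existsUnique_isChainEquilibrium hκ₁ hκ₂ hκ₃ hP hk hk₃ h₁ h₂).exists⟩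
  rintro ⟨p, hp⟩
  obtain ⟨hx, hy, h₁, h₂⟩ := (isChainEquilibrium_iff hκ₁ hκ₂ hP hk hk₃).1 hp
  refine ⟨(mul_pos_iff_of_pos_left (div_pos hκ₃ hκ₁)).1 ?_,
    (mul_pos_iff_of_pos_left (div_pos hκ₃ hκ₂)).1 ?_⟩
  · exact h₁ ▸ rpowMonomial_pos hx hy _
  · exact h₂ ▸ rpowMonomial_pos hx hy _

end IsChainEquilibrium

/-- For the chain of three reactions, existence of a positive equilibrium,
existence of a unique positive equilibrium, and the sign condition
sgn(h₁) = sgn(h₁+h₂) = sgn(h₁+h₂+h₃) ≠ 0 are equivalent. -/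
theorem chain_exist_equilibrium
    (a₁ b₁ a₂ b₂ a₃ b₃ a₄ b₄ : ℝ) (κ₁ κ₂ κ₃ : ℝ)
    (hκ₁ : 0 < κ₁) (hκ₂ : 0 < κ₂) (hκ₃ : 0 < κ₃)
    (hline : ¬ Collinear ℝ ({(a₁, b₁), (a₂, b₂), (a₃, b₃)} : Set (ℝ × ℝ)))
    (h₁ h₂ h₃ : ℝ)
    (hh₁ : h₁ = (a₄ - a₂) * (b₃ - b₂) - (b₄ - b₂) * (a₃ - a₂))
    (hh₂ : h₂ = (a₃ - a₁) * (b₄ - b₁) - (b₃ - b₁) * (a₄ - a₁))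
    (hh₃ : h₃ = (a₄ - a₁) * (b₂ - b₁) - (b₄ - b₁) * (a₂ - a₁)) :
    ((∃ p : ℝ × ℝ, 0 < p.1 ∧ 0 < p.2 ∧
        (a₂ - a₁) * κ₁ * p.1 ^ a₁ * p.2 ^ b₁ + (a₃ - a₂) * κ₂ * p.1 ^ a₂ * p.2 ^ b₂
          + (a₄ - a₃) * κ₃ * p.1 ^ a₃ * p.2 ^ b₃ = 0 ∧
        (b₂ - b₁) * κ₁ * p.1 ^ a₁ * p.2 ^ b₁ + (b₃ - b₂) * κ₂ * p.1 ^ a₂ * p.2 ^ b₂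
          + (b₄ - b₃) * κ₃ * p.1 ^ a₃ * p.2 ^ b₃ = 0) ↔
      (∃! p : ℝ × ℝ, 0 < p.1 ∧ 0 < p.2 ∧
        (a₂ - a₁) * κ₁ * p.1 ^ a₁ * p.2 ^ b₁ + (a₃ - a₂) * κ₂ * p.1 ^ a₂ * p.2 ^ b₂
          + (a₄ - a₃) * κ₃ * p.1 ^ a₃ * p.2 ^ b₃ = 0 ∧
        (b₂ - b₁) * κ₁ * p.1 ^ a₁ * p.2 ^ b₁ + (b₃ - b₂) * κ₂ * p.1 ^ a₂ * p.2 ^ b₂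
          + (b₄ - b₃) * κ₃ * p.1 ^ a₃ * p.2 ^ b₃ = 0)) ∧
    ((∃ p : ℝ × ℝ, 0 < p.1 ∧ 0 < p.2 ∧
        (a₂ - a₁) * κ₁ * p.1 ^ a₁ * p.2 ^ b₁ + (a₃ - a₂) * κ₂ * p.1 ^ a₂ * p.2 ^ b₂
          + (a₄ - a₃) * κ₃ * p.1 ^ a₃ * p.2 ^ b₃ = 0 ∧
        (b₂ - b₁) * κ₁ * p.1 ^ a₁ * p.2 ^ b₁ + (b₃ - b₂) * κ₂ * p.1 ^ a₂ * p.2 ^ b₂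
          + (b₄ - b₃) * κ₃ * p.1 ^ a₃ * p.2 ^ b₃ = 0) ↔
      (Real.sign h₁ = Real.sign (h₁ + h₂) ∧
       Real.sign (h₁ + h₂) = Real.sign (h₁ + h₂ + h₃) ∧
       Real.sign h₁ ≠ 0)) := by
  have hk : h₁ • ((a₂, b₂) - (a₁, b₁)) + (h₁ + h₂) • ((a₃, b₃) - (a₂, b₂))
      + (h₁ + h₂ + h₃) • ((a₄, b₄) - (a₃, b₃)) = (0 : ℝ × ℝ) := by
    subst_vars; ext <;> simp only [Prod.mk_sub_mk, Prod.smul_mk, smul_eq_mul, Prod.mk_add_mk,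
      Prod.fst_zero, Prod.snd_zero] <;> ring
  have hk₃ : h₁ + h₂ + h₃ ≠ 0 := by
    have hD := det_ne_zero_of_not_collinear hline
    contrapose! hD
    subst_vars; simp only [Prod.fst_sub, Prod.snd_sub]; linear_combination -hD
  have hexists := exists_isChainEquilibrium_iff hκ₁ hκ₂ hκ₃ hline hk hk₃
  refine ⟨⟨fun h => ?_, ExistsUnique.exists⟩,
    hexists.trans Real.sign_eq_sign_eq_sign_ne_zero_iff.symm⟩
  exact existsUnique_isChainEquilibrium hκ₁ hκ₂ hκ₃ hline hk hk₃ (hexists.1 h).1 (hexists.1 h).2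
end

section
/- Consider the scaled chain ODE ẋ = f(x,y) = (a₂−a₁)κ̄₁x^{a₁}y^{b₁} + (a₃−a₂)κ̄₂x^{a₂}y^{b₂} + (a₄−a₃)κ̄₃x^{a₃}y^{b₃}, ẏ = g(x,y) = K[(b₂−b₁)κ̄₁x^{a₁}y^{b₁} + (b₃−b₂)κ̄₂x^{a₂}y^{b₂} + (b₄−b₃)κ̄₃x^{a₃}y^{b₃}], where K ≠ 0 and κ̄₁ = λh₁, κ̄₂ = λ(h₁+h₂), κ̄₃ = λ(h₁+h₂+h₃) for some λ ≠ 0, with h₁ = Δ(243), h₂ = Δ(134), h₃ = Δ(142). Then the determinant of the Jacobian matrix of (f,g) at the point (1,1) equals ((h₁+h₂+h₃)/λ)·K·κ̄₁κ̄₂κ̄₃. -/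
lemma hasDerivAt_mul_rpow_const_one (c p : ℝ) :
    HasDerivAt (fun x : ℝ => c * x ^ p) (c * p) 1 := by
  simpa using (Real.hasDerivAt_rpow_const (x := 1) (p := p) (Or.inl one_ne_zero)).const_mul c

lemma deriv_three_mul_rpow_one (c₁ c₂ c₃ p₁ p₂ p₃ : ℝ) :
    deriv (fun x : ℝ => c₁ * x ^ p₁ + c₂ * x ^ p₂ + c₃ * x ^ p₃) 1
      = c₁ * p₁ + c₂ * p₂ + c₃ * p₃ :=
  (((hasDerivAt_mul_rpow_const_one c₁ p₁).add (hasDerivAt_mul_rpow_const_one c₂ p₂)).add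
    (hasDerivAt_mul_rpow_const_one c₃ p₃)).deriv

theorem chain_det_jacobian_general
    (a₁ b₁ a₂ b₂ a₃ b₃ a₄ b₄ : ℝ) (K lam : ℝ) (hlam : lam ≠ 0)
    (h₁ h₂ h₃ : ℝ)
    (hh₁ : h₁ = (a₄ - a₂) * (b₃ - b₂) - (b₄ - b₂) * (a₃ - a₂))
    (hh₂ : h₂ = (a₃ - a₁) * (b₄ - b₁) - (b₃ - b₁) * (a₄ - a₁))
    (hh₃ : h₃ = (a₄ - a₁) * (b₂ - b₁) - (b₄ - b₁) * (a₂ - a₁))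
    (κ₁ κ₂ κ₃ : ℝ)
    (hκ₁ : κ₁ = lam * h₁) (hκ₂ : κ₂ = lam * (h₁ + h₂)) (hκ₃ : κ₃ = lam * (h₁ + h₂ + h₃)) :
    deriv (fun x : ℝ => (a₂ - a₁) * κ₁ * x ^ a₁ * (1 : ℝ) ^ b₁
        + (a₃ - a₂) * κ₂ * x ^ a₂ * (1 : ℝ) ^ b₂
        + (a₄ - a₃) * κ₃ * x ^ a₃ * (1 : ℝ) ^ b₃) 1
      * deriv (fun y : ℝ => K * ((b₂ - b₁) * κ₁ * (1 : ℝ) ^ a₁ * y ^ b₁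
        + (b₃ - b₂) * κ₂ * (1 : ℝ) ^ a₂ * y ^ b₂
        + (b₄ - b₃) * κ₃ * (1 : ℝ) ^ a₃ * y ^ b₃)) 1
    - deriv (fun y : ℝ => (a₂ - a₁) * κ₁ * (1 : ℝ) ^ a₁ * y ^ b₁
        + (a₃ - a₂) * κ₂ * (1 : ℝ) ^ a₂ * y ^ b₂
        + (a₄ - a₃) * κ₃ * (1 : ℝ) ^ a₃ * y ^ b₃) 1
      * deriv (fun x : ℝ => K * ((b₂ - b₁) * κ₁ * x ^ a₁ * (1 : ℝ) ^ b₁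
        + (b₃ - b₂) * κ₂ * x ^ a₂ * (1 : ℝ) ^ b₂
        + (b₄ - b₃) * κ₃ * x ^ a₃ * (1 : ℝ) ^ b₃)) 1
    = ((h₁ + h₂ + h₃) / lam) * K * (κ₁ * κ₂ * κ₃) := by
  simp only [Real.one_rpow, mul_one, deriv_const_mul_field', deriv_three_mul_rpow_one]
  subst hκ₁ hκ₂ hκ₃ hh₁ hh₂ hh₃
  field_simp
  ring

/-- The determinant of the Jacobian of the scaled chain system at (1,1)
equals ((h₁+h₂+h₃)/λ)·K·κ̄₁κ̄₂κ̄₃. -/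
theorem chain_det_jacobian
    (a₁ b₁ a₂ b₂ a₃ b₃ a₄ b₄ : ℝ) (K lam : ℝ) (hK : K ≠ 0) (hlam : lam ≠ 0)
    (h₁ h₂ h₃ : ℝ)
    (hh₁ : h₁ = (a₄ - a₂) * (b₃ - b₂) - (b₄ - b₂) * (a₃ - a₂))
    (hh₂ : h₂ = (a₃ - a₁) * (b₄ - b₁) - (b₃ - b₁) * (a₄ - a₁))
    (hh₃ : h₃ = (a₄ - a₁) * (b₂ - b₁) - (b₄ - b₁) * (a₂ - a₁))
    (κ₁ κ₂ κ₃ : ℝ)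
    (hκ₁ : κ₁ = lam * h₁) (hκ₂ : κ₂ = lam * (h₁ + h₂)) (hκ₃ : κ₃ = lam * (h₁ + h₂ + h₃)) :
    deriv (fun x : ℝ => (a₂ - a₁) * κ₁ * x ^ a₁ * (1 : ℝ) ^ b₁
        + (a₃ - a₂) * κ₂ * x ^ a₂ * (1 : ℝ) ^ b₂
        + (a₄ - a₃) * κ₃ * x ^ a₃ * (1 : ℝ) ^ b₃) 1
      * deriv (fun y : ℝ => K * ((b₂ - b₁) * κ₁ * (1 : ℝ) ^ a₁ * y ^ b₁
        + (b₃ - b₂) * κ₂ * (1 : ℝ) ^ a₂ * y ^ b₂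
        + (b₄ - b₃) * κ₃ * (1 : ℝ) ^ a₃ * y ^ b₃)) 1
    - deriv (fun y : ℝ => (a₂ - a₁) * κ₁ * (1 : ℝ) ^ a₁ * y ^ b₁
        + (a₃ - a₂) * κ₂ * (1 : ℝ) ^ a₂ * y ^ b₂
        + (a₄ - a₃) * κ₃ * (1 : ℝ) ^ a₃ * y ^ b₃) 1
      * deriv (fun x : ℝ => K * ((b₂ - b₁) * κ₁ * x ^ a₁ * (1 : ℝ) ^ b₁
        + (b₃ - b₂) * κ₂ * x ^ a₂ * (1 : ℝ) ^ b₂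
        + (b₄ - b₃) * κ₃ * x ^ a₃ * (1 : ℝ) ^ b₃)) 1
    = ((h₁ + h₂ + h₃) / lam) * K * (κ₁ * κ₂ * κ₃) :=
  chain_det_jacobian_general a₁ b₁ a₂ b₂ a₃ b₃ a₄ b₄ K lam hlam h₁ h₂ h₃ hh₁ hh₂ hh₃ κ₁ κ₂ κ₃ hκ₁
    hκ₂ hκ₃
end

section
/- Let p and q be real numbers with pq < 0 and p + q ≠ 0. Then the point (1,1) is a center of the planar ODE ẋ = (p−q) + q·x^p y^q − p·x^q y^p, ẏ = (q−p) + p·x^p y^q − q·x^q y^p on ℝ₊²: there exists an open neighborhood U ⊆ ℝ₊² of (1,1) such that every solution of the ODE starting at a point of U \ {(1,1)} is a nonconstant periodic solution. -/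
/-!
At `(1, 1)` the linear part of the field is `p² - q²` times the quarter turn `(u, v) ↦ (-v, u)`,
and `p² - q² = (p + q)(p - q) ≠ 0`. Hence a solution starting close enough to `(1, 1)` stays close
for a little more than one turn (a Grönwall-type fence), and since it winds around `(1, 1)` at
angular speed close to `|p² - q²|` it meets the diagonal once in the past and once in the future.
The field is reversible, `F (y, x) = -swap (F (x, y))`, so by uniqueness of solutions each meeting
with the diagonal is a time-reflection symmetry of the solution; two such reflections compose to a
translation in time, which is a period. The solution is nonconstant because `(1, 1)` is an isolated
zero of the field.
-/

open Real Set Filter Topology Metric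

section ODE

variable {E : Type*} [NormedAddCommGroup E] [NormedSpace ℝ E]

theorem norm_le_of_norm_deriv_le_mul_norm {f f' : ℝ → E} {R K T : ℝ} (hR : 0 < R) (hK : 0 < K)
    (hf : ∀ t, HasDerivAt f (f' t) t) (hbound : ∀ t, ‖f t‖ ≤ R → ‖f' t‖ ≤ K * ‖f t‖)
    (h0 : ‖f 0‖ ≤ R * exp (-(2 * K * T))) : ∀ t ∈ Icc 0 T, ‖f t‖ ≤ R := by
  set B : ℝ → ℝ := fun t => R * exp (2 * K * (t - T))
  have hB : ∀ t, HasDerivAt B (2 * K * B t) t := fun t => by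
    simpa [B, mul_comm, mul_left_comm] using
      (((hasDerivAt_id t).sub_const T).const_mul (2 * K)).exp.const_mul R
  have hBR : ∀ t ≤ T, B t ≤ R := fun t ht =>
    mul_le_of_le_one_right hR.le (exp_le_one_iff.2 (by nlinarith))
  have hfB : ∀ t ∈ Icc 0 T, ‖f t‖ ≤ B t :=
    image_norm_le_of_norm_deriv_right_lt_deriv_boundary
      (fun t _ => (hf t).continuousAt.continuousWithinAt) (fun t _ => (hf t).hasDerivWithinAt)
      (by simpa [B] using h0) hB fun t ht hft => by
        have hBt : 0 < B t := by positivity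
        calc ‖f' t‖ ≤ K * ‖f t‖ := hbound t (hft ▸ hBR t ht.2.le)
          _ < 2 * K * B t := by rw [hft]; nlinarith
  exact fun t ht => (hfB t ht).trans (hBR t ht.2)

theorem norm_sub_le_of_mem_Icc_of_norm_le_mul_norm_sub {F : E → E} {γ : ℝ → E} {z₀ : E}
    {R K T : ℝ} (hR : 0 < R) (hK : 0 < K) (hF : ∀ z, ‖z - z₀‖ ≤ R → ‖F z‖ ≤ K * ‖z - z₀‖)
    (hγ : ∀ t, HasDerivAt γ (F (γ t)) t) (h0 : ‖γ 0 - z₀‖ ≤ R * exp (-(2 * K * T))) :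
    ∀ t ∈ Icc (-T) T, ‖γ t - z₀‖ ≤ R := by
  have hfwd := norm_le_of_norm_deriv_le_mul_norm hR hK (fun t => (hγ t).sub_const z₀)
    (fun t => hF (γ t)) h0
  have hbwd := norm_le_of_norm_deriv_le_mul_norm (f := fun t => γ (-t) - z₀) hR hK
    (fun t => ((hγ (-t)).scomp t (hasDerivAt_neg t)).sub_const z₀)
    (fun t ht => by simpa using hF (γ (-t)) ht) (by simpa using h0)
  intro t ht
  rcases le_total 0 t with h | h
  · exact hfwd t ⟨h, ht.2⟩
  · simpa using hbwd (-t) ⟨by linarith, by linarith [ht.1]⟩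

theorem ODE_solution_unique_of_contDiffAt {F : E → E} {Ω : Set E}
    (hF : ∀ z ∈ Ω, ContDiffAt ℝ 1 F z) {f g : ℝ → E} (hf : ∀ t, HasDerivAt f (F (f t)) t)
    (hg : ∀ t, HasDerivAt g (F (g t)) t) (hfΩ : ∀ t, f t ∈ Ω) {t₀ : ℝ} (heq : f t₀ = g t₀) :
    f = g := by
  have hlocal : ∀ t, f t = g t → f =ᶠ[𝓝 t] g := fun t ht => by
    obtain ⟨K, s, hs, hlip⟩ := (hF _ (hfΩ t)).exists_lipschitzOnWith
    exact ODE_solution_unique_of_eventually (v := fun _ => F) (s := fun _ => s)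
      (Eventually.of_forall fun _ => hlip)
      ((Eventually.of_forall hf).and ((hf t).continuousAt.preimage_mem_nhds hs))
      ((Eventually.of_forall hg).and ((hg t).continuousAt.preimage_mem_nhds (ht ▸ hs))) ht
  have hset : {t | f t = g t} = {t | f =ᶠ[𝓝 t] g} :=
    Set.ext fun t => ⟨hlocal t, EventuallyEq.eq_of_nhds⟩
  have hclopen : IsClopen {t | f t = g t} :=
    ⟨isClosed_eq (continuous_iff_continuousAt.2 fun t => (hf t).continuousAt)
      (continuous_iff_continuousAt.2 fun t => (hg t).continuousAt),
      hset ▸ isOpen_setOfPred_eventually_nhds⟩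
  exact funext (eq_univ_iff_forall.1 (hclopen.eq_univ ⟨t₀, heq⟩))

theorem eq_comp_reflect_of_reversible {F : E → E} {Ω : Set E} (hF : ∀ z ∈ Ω, ContDiffAt ℝ 1 F z)
    {σ : E →L[ℝ] E} (hrev : ∀ z, F (σ z) = -σ (F z)) {γ : ℝ → E}
    (hγ : ∀ t, HasDerivAt γ (F (γ t)) t) (hγΩ : ∀ t, γ t ∈ Ω) {c : ℝ} (hc : σ (γ c) = γ c) :
    γ = fun t => σ (γ (2 * c - t)) := by
  refine ODE_solution_unique_of_contDiffAt hF hγ (fun t => ?_) hγΩ (t₀ := c)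
    (by simp [two_mul, hc])
  have h := σ.hasFDerivAt.comp_hasDerivAt t
    ((hγ (2 * c - t)).scomp t ((hasDerivAt_id t).const_sub _))
  convert h using 1
  · rfl
  · simp [hrev]

end ODE

theorem Function.periodic_of_eq_comp_reflect {α : Type*} {γ : ℝ → α} {σ : α → α} {c₁ c₂ : ℝ}
    (h₁ : γ = fun t => σ (γ (2 * c₁ - t))) (h₂ : γ = fun t => σ (γ (2 * c₂ - t))) :
    Function.Periodic γ (2 * (c₂ - c₁)) := fun t =>
  calc γ (t + 2 * (c₂ - c₁)) = σ (γ (2 * c₂ - (t + 2 * (c₂ - c₁)))) := congrFun h₂ _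
    _ = σ (γ (2 * c₁ - t)) := by ring_nf
    _ = γ t := (congrFun h₁ t).symm

theorem Real.exists_mem_Icc_eq_zero_of_le_angular_deriv {D S D' S' : ℝ → ℝ} {m a b : ℝ}
    (hab : a ≤ b) (hπ : π < m * (b - a)) (hD : ∀ t ∈ Icc a b, HasDerivAt D (D' t) t)
    (hS : ∀ t ∈ Icc a b, HasDerivAt S (S' t) t)
    (hrot : ∀ t ∈ Icc a b, m * (D t ^ 2 + S t ^ 2) ≤ S' t * D t - S t * D' t) :
    ∃ t ∈ Icc a b, D t = 0 := by
  by_contra! hD0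
  set θ : ℝ → ℝ := fun t => arctan (S t / D t)
  have hθ : ∀ t ∈ Icc a b,
      HasDerivAt θ ((S' t * D t - S t * D' t) / (D t ^ 2 + S t ^ 2)) t := fun t ht => by
    refine ((hasDerivAt_arctan _).comp t ((hS t ht).div (hD t ht) (hD0 t ht))).congr_deriv ?_
    have := hD0 t ht
    simp only [Pi.div_apply]
    field_simp
  have hmono : m * (b - a) ≤ θ b - θ a := by
    refine (convex_Icc a b).mul_sub_le_image_sub_of_le_deriv
      (fun t ht => (hθ t ht).continuousAt.continuousWithinAt)
      (fun t ht => (hθ t (interior_subset ht)).differentiableAt.differentiableWithinAt)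
      (fun t ht => ?_) a ⟨le_rfl, hab⟩ b ⟨hab, le_rfl⟩ hab
    have ht' := interior_subset ht
    rw [(hθ t ht').deriv, le_div_iff₀ (by have := hD0 t ht'; positivity)]
    exact hrot t ht'
  have hθa := neg_pi_div_two_lt_arctan (S a / D a)
  have hθb := arctan_lt_pi_div_two (S b / D b)
  linarith

def quarterTurn : ℝ × ℝ →L[ℝ] ℝ × ℝ :=
  (-ContinuousLinearMap.snd ℝ ℝ ℝ).prod (ContinuousLinearMap.fst ℝ ℝ ℝ)

@[simp]
theorem quarterTurn_apply (w : ℝ × ℝ) : quarterTurn w = (-w.2, w.1) := rfl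

@[simp]
theorem norm_quarterTurn (w : ℝ × ℝ) : ‖quarterTurn w‖ = ‖w‖ := by
  simp [Prod.norm_def, max_comm]

theorem exists_mem_Icc_fst_eq_snd_of_hasDerivAt_quarterTurn {w e : ℝ → ℝ × ℝ} {ω a b : ℝ}
    (hω : ω ≠ 0) (hab : a + 2 * π / |ω| ≤ b)
    (hw : ∀ t ∈ Icc a b, HasDerivAt w (ω • quarterTurn (w t) + e t) t)
    (he : ∀ t ∈ Icc a b, ‖e t‖ ≤ |ω| / 8 * ‖w t‖) : ∃ t ∈ Icc a b, (w t).1 = (w t).2 := by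
  have hω' : 0 < |ω| := abs_pos.2 hω
  obtain ⟨s, hs, hsω⟩ : ∃ s : ℝ, |s| = 1 ∧ s * ω = |ω| := by
    rcases abs_cases ω with ⟨h, _⟩ | ⟨h, _⟩
    exacts [⟨1, by simp [h]⟩, ⟨-1, by simp [h]⟩]
  set X : ℝ → ℝ := fun t => (w t).1
  set Y : ℝ → ℝ := fun t => (w t).2
  have hX : ∀ t ∈ Icc a b, HasDerivAt X (-ω * Y t + (e t).1) t := fun t ht =>
    ((ContinuousLinearMap.fst ℝ ℝ ℝ).hasFDerivAt.comp_hasDerivAt t (hw t ht)).congr_deriv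
      (by simp [Y])
  have hY : ∀ t ∈ Icc a b, HasDerivAt Y (ω * X t + (e t).2) t := fun t ht =>
    ((ContinuousLinearMap.snd ℝ ℝ ℝ).hasFDerivAt.comp_hasDerivAt t (hw t ht)).congr_deriv
      (by simp [X])
  have herr : ∀ t ∈ Icc a b,
      |2 * ((e t).2 * X t - (e t).1 * Y t)| ≤ |ω| / 2 * (X t ^ 2 + Y t ^ 2) := fun t ht => by
    have he1 := (norm_fst_le (e t)).trans (he t ht)
    have he2 := (norm_snd_le (e t)).trans (he t ht)
    have hw' : ‖w t‖ ≤ |X t| + |Y t| :=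
      max_le (le_add_of_nonneg_right (abs_nonneg _)) (le_add_of_nonneg_left (abs_nonneg _))
    simp only [Real.norm_eq_abs] at he1 he2
    calc |2 * ((e t).2 * X t - (e t).1 * Y t)|
        ≤ 2 * (|(e t).2| * |X t| + |(e t).1| * |Y t|) := by
          rw [abs_mul, abs_two, ← abs_mul, ← abs_mul]
          gcongr
          exact abs_sub _ _
      _ ≤ 2 * (|ω| / 8 * ‖w t‖ * (|X t| + |Y t|)) := by
          nlinarith [abs_nonneg (X t), abs_nonneg (Y t)]
      _ ≤ |ω| / 4 * (|X t| + |Y t|) ^ 2 := by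
          nlinarith [mul_le_mul_of_nonneg_left hw' (by positivity : 0 ≤ |ω| * (|X t| + |Y t|))]
      _ ≤ |ω| / 2 * (X t ^ 2 + Y t ^ 2) := by
          nlinarith [sq_nonneg (|X t| - |Y t|), sq_abs (X t), sq_abs (Y t)]
  -- `(X - Y, s * (X + Y))` turns at angular speed at least `3 |ω| / 4` in the positive sense.
  obtain ⟨t, ht, hD⟩ := Real.exists_mem_Icc_eq_zero_of_le_angular_deriv (m := 3 * |ω| / 4)
    (D := fun t => X t - Y t) (S := fun t => s * (X t + Y t)) (by linarith [div_pos two_pi_pos hω'])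
    (by
      have hab' : 2 * π / |ω| ≤ b - a := by linarith
      have hT : 3 * |ω| / 4 * (2 * π / |ω|) = 3 * π / 2 := by field_simp; ring
      nlinarith [pi_pos, mul_le_mul_of_nonneg_left hab' (by positivity : 0 ≤ 3 * |ω| / 4)])
    (fun t ht => (hX t ht).sub (hY t ht)) (fun t ht => ((hX t ht).add (hY t ht)).const_mul s)
    (fun t ht => by
      have hs2 : s ^ 2 = 1 := by rw [← sq_abs, hs, one_pow]
      have hserr := neg_abs_le (s * (2 * ((e t).2 * X t - (e t).1 * Y t)))
      rw [abs_mul, hs, one_mul] at hserr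
      linear_combination hserr + herr t ht + (3 * |ω| / 4 * (X t + Y t) ^ 2) * hs2
        - 2 * (X t ^ 2 + Y t ^ 2) * hsω)
  exact ⟨t, ht, sub_eq_zero.1 hD⟩

theorem exists_pos_forall_exists_lt_fst_eq_snd {F : ℝ × ℝ → ℝ × ℝ} {z₀ : ℝ × ℝ} {ω R : ℝ}
    (hω : ω ≠ 0) (hR : 0 < R)
    (happrox : ∀ z, ‖z - z₀‖ ≤ R → ‖F z - ω • quarterTurn (z - z₀)‖ ≤ |ω| / 8 * ‖z - z₀‖) :
    ∃ r > 0, ∀ γ : ℝ → ℝ × ℝ, (∀ t, HasDerivAt γ (F (γ t)) t) → ‖γ 0 - z₀‖ < r →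
      ∃ t₁ t₂, t₁ < t₂ ∧ (γ t₁ - z₀).1 = (γ t₁ - z₀).2 ∧ (γ t₂ - z₀).1 = (γ t₂ - z₀).2 := by
  have hω' : 0 < |ω| := abs_pos.2 hω
  set T := 2 * π / |ω| + 1
  have hF : ∀ z, ‖z - z₀‖ ≤ R → ‖F z‖ ≤ 2 * |ω| * ‖z - z₀‖ := fun z hz =>
    calc ‖F z‖ ≤ ‖ω • quarterTurn (z - z₀)‖ + ‖F z - ω • quarterTurn (z - z₀)‖ :=
          norm_le_insert' _ _
      _ ≤ |ω| * ‖z - z₀‖ + |ω| / 8 * ‖z - z₀‖ := by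
          rw [norm_smul, norm_quarterTurn, Real.norm_eq_abs]; linarith [happrox z hz]
      _ ≤ 2 * |ω| * ‖z - z₀‖ := by nlinarith [norm_nonneg (z - z₀)]
  refine ⟨R * exp (-(2 * (2 * |ω|) * T)), by positivity, fun γ hγ h0 => ?_⟩
  have hnear := norm_sub_le_of_mem_Icc_of_norm_le_mul_norm_sub hR (by positivity) hF hγ h0.le
  have hcross : ∀ a, -T ≤ a → a + 2 * π / |ω| ≤ T →
      ∃ t ∈ Icc a (a + 2 * π / |ω|), (γ t - z₀).1 = (γ t - z₀).2 := fun a ha hb =>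
    exists_mem_Icc_fst_eq_snd_of_hasDerivAt_quarterTurn
      (e := fun t => F (γ t) - ω • quarterTurn (γ t - z₀)) hω le_rfl
      (fun t _ => ((hγ t).sub_const z₀).congr_deriv (by abel))
      (fun t ht => happrox _ (hnear t ⟨ha.trans ht.1, ht.2.trans hb⟩))
  obtain ⟨t₁, ht₁, h₁⟩ := hcross (-T) le_rfl (by linarith [div_pos two_pi_pos hω'])
  obtain ⟨t₂, ht₂, h₂⟩ := hcross 1 (by linarith [div_pos two_pi_pos hω']) (by linarith)
  exact ⟨t₁, t₂, by linarith [ht₁.2, ht₂.1], h₁, h₂⟩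

def IsCenter (F : ℝ × ℝ → ℝ × ℝ) (Ω : Set (ℝ × ℝ)) (z₀ : ℝ × ℝ) : Prop :=
  ∃ U : Set (ℝ × ℝ), IsOpen U ∧ U ⊆ Ω ∧ z₀ ∈ U ∧
    ∀ γ : ℝ → ℝ × ℝ, (∀ t, γ t ∈ Ω) → (∀ t, HasDerivAt γ (F (γ t)) t) → γ 0 ∈ U → γ 0 ≠ z₀ →
      (∃ T, 0 < T ∧ Function.Periodic γ T) ∧ ∃ s t, γ s ≠ γ t

theorem isCenter_of_reversible {F : ℝ × ℝ → ℝ × ℝ} {Ω : Set (ℝ × ℝ)} {c ω : ℝ}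
    (hΩ : Ω ∈ 𝓝 (c, c)) (hF : ∀ z ∈ Ω, ContDiffAt ℝ 1 F z) (hrev : ∀ z, F z.swap = -(F z).swap)
    (hFc : F (c, c) = 0) (hlin : HasFDerivAt F (ω • quarterTurn) (c, c)) (hω : ω ≠ 0) :
    IsCenter F Ω (c, c) := by
  obtain ⟨R, hR, hRΩ⟩ := nhds_basis_closedBall.mem_iff.1
    (inter_mem hΩ (hlin.isLittleO.def (by positivity : 0 < |ω| / 8)))
  have happrox : ∀ z, ‖z - (c, c)‖ ≤ R →
      ‖F z - ω • quarterTurn (z - (c, c))‖ ≤ |ω| / 8 * ‖z - (c, c)‖ := fun z hz => by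
    simpa [hFc] using (hRΩ (mem_closedBall_iff_norm.2 hz)).2
  obtain ⟨r, hr, hcross⟩ := exists_pos_forall_exists_lt_fst_eq_snd hω hR happrox
  refine ⟨ball (c, c) (min r R), isOpen_ball, fun z hz => (hRΩ ?_).1,
    mem_ball_self (lt_min hr hR), fun γ hγΩ hγ h0 hne => ?_⟩
  · exact ball_subset_closedBall (ball_subset_ball (min_le_right r R) hz)
  rw [mem_ball_iff_norm] at h0
  obtain ⟨t₁, t₂, h12, h₁, h₂⟩ := hcross γ hγ (h0.trans_le (min_le_left r R))
  have hrefl : ∀ c', (γ c' - (c, c)).1 = (γ c' - (c, c)).2 →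
      γ = fun t => ContinuousLinearEquiv.prodComm ℝ ℝ ℝ (γ (2 * c' - t)) := fun c' h =>
    eq_comp_reflect_of_reversible hF (σ := (ContinuousLinearEquiv.prodComm ℝ ℝ ℝ : _)) hrev hγ hγΩ
      (by simp only [Prod.fst_sub, Prod.snd_sub, sub_left_inj] at h; ext <;> simp [h])
  refine ⟨⟨2 * (t₂ - t₁), by linarith,
    Function.periodic_of_eq_comp_reflect (hrefl t₁ h₁) (hrefl t₂ h₂)⟩, ?_⟩
  by_contra! hconst
  have hγ0 : F (γ 0) = 0 := ((hasDerivAt_const 0 (γ 0)).congr_of_eventuallyEq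
    (Eventually.of_forall fun t => hconst t 0)).unique (hγ 0) |>.symm
  have h := happrox (γ 0) (h0.le.trans (min_le_right r R))
  rw [hγ0, zero_sub, norm_neg, norm_smul, norm_quarterTurn, Real.norm_eq_abs] at h
  exact hne (sub_eq_zero.1 (norm_le_zero_iff.1
    (by nlinarith [abs_pos.2 hω, norm_nonneg (γ 0 - (c, c))])))

theorem hasFDerivAt_rpow_mul_rpow_one_one (a b : ℝ) :
    HasFDerivAt (fun z : ℝ × ℝ => z.1 ^ a * z.2 ^ b)
      (a • ContinuousLinearMap.fst ℝ ℝ ℝ + b • ContinuousLinearMap.snd ℝ ℝ ℝ) (1, 1) := by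
  have h (c : ℝ) := hasDerivAt_rpow_const (x := 1) (p := c) (Or.inl one_ne_zero)
  have := ((h a).comp_hasFDerivAt (1, 1) (ContinuousLinearMap.fst ℝ ℝ ℝ).hasFDerivAt).mul
    ((h b).comp_hasFDerivAt (1, 1) (ContinuousLinearMap.snd ℝ ℝ ℝ).hasFDerivAt)
  exact this.congr_fderiv (by ext <;> simp)

noncomputable def chainField (p q : ℝ) (z : ℝ × ℝ) : ℝ × ℝ :=
  ((p - q) + q * z.1 ^ p * z.2 ^ q - p * z.1 ^ q * z.2 ^ p,
   (q - p) + p * z.1 ^ p * z.2 ^ q - q * z.1 ^ q * z.2 ^ p)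

namespace chainField

variable (p q : ℝ)

theorem swap (z : ℝ × ℝ) : chainField p q z.swap = -(chainField p q z).swap := by
  simp only [chainField, Prod.swap, Prod.neg_mk, Prod.mk.injEq]
  constructor <;> ring

theorem one_one : chainField p q (1, 1) = 0 := by
  simp [chainField]

theorem contDiffAt {z : ℝ × ℝ} (hz : 0 < z.1 ∧ 0 < z.2) : ContDiffAt ℝ 1 (chainField p q) z := by
  have hx (a : ℝ) : ContDiffAt ℝ 1 (fun w : ℝ × ℝ => w.1 ^ a) z :=
    (contDiffAt_rpow_const_of_ne hz.1.ne').comp z contDiffAt_fst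
  have hy (a : ℝ) : ContDiffAt ℝ 1 (fun w : ℝ × ℝ => w.2 ^ a) z :=
    (contDiffAt_rpow_const_of_ne hz.2.ne').comp z contDiffAt_snd
  exact ((contDiffAt_const.add ((contDiffAt_const.mul (hx p)).mul (hy q))).sub
      ((contDiffAt_const.mul (hx q)).mul (hy p))).prodMk
    ((contDiffAt_const.add ((contDiffAt_const.mul (hx p)).mul (hy q))).sub
      ((contDiffAt_const.mul (hx q)).mul (hy p)))

theorem hasFDerivAt : HasFDerivAt (chainField p q) ((p ^ 2 - q ^ 2) • quarterTurn) (1, 1) := by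
  have hu := hasFDerivAt_rpow_mul_rpow_one_one p q
  have hv := hasFDerivAt_rpow_mul_rpow_one_one q p
  have h := (((hu.const_mul q).const_add (p - q)).sub (hv.const_mul p)).prodMk
    (((hu.const_mul p).const_add (q - p)).sub (hv.const_mul q))
  refine (h.congr_fderiv ?_).congr_of_eventuallyEq (Eventually.of_forall fun z => ?_)
  · ext <;> simp <;> ring
  · simp only [chainField, Pi.sub_apply, Prod.mk.injEq]
    constructor <;> ring

end chainField

/-- If pq < 0 and p + q ≠ 0, then (1,1) is a center of the ODE
ẋ = (p−q) + q·x^p y^q − p·x^q y^p, ẏ = (q−p) + p·x^p y^q − q·x^q y^p on ℝ₊². -/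
theorem chain_reversible_center (p q : ℝ) (hpq : p * q < 0) (hsum : p + q ≠ 0) :
    ∃ U : Set (ℝ × ℝ), IsOpen U ∧ U ⊆ {z : ℝ × ℝ | 0 < z.1 ∧ 0 < z.2} ∧
      ((1, 1) : ℝ × ℝ) ∈ U ∧
      ∀ γ : ℝ → ℝ × ℝ,
        (∀ t : ℝ, 0 < (γ t).1 ∧ 0 < (γ t).2) →
        (∀ t : ℝ, HasDerivAt γ
          ((p - q) + q * (γ t).1 ^ p * (γ t).2 ^ q - p * (γ t).1 ^ q * (γ t).2 ^ p,
           (q - p) + p * (γ t).1 ^ p * (γ t).2 ^ q - q * (γ t).1 ^ q * (γ t).2 ^ p) t) →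
        γ 0 ∈ U → γ 0 ≠ ((1, 1) : ℝ × ℝ) →
        (∃ T : ℝ, 0 < T ∧ ∀ t : ℝ, γ (t + T) = γ t) ∧ (∃ s t : ℝ, γ s ≠ γ t) := by
  have hpq' : p - q ≠ 0 := sub_ne_zero.2 fun h => by subst h; nlinarith [sq_nonneg p]
  have hω : p ^ 2 - q ^ 2 ≠ 0 := by
    rw [sq_sub_sq]
    exact mul_ne_zero hsum hpq'
  have hΩ : {z : ℝ × ℝ | 0 < z.1 ∧ 0 < z.2} ∈ 𝓝 (1, 1) :=
    prod_mem_nhds (Ioi_mem_nhds one_pos) (Ioi_mem_nhds one_pos)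
  exact isCenter_of_reversible hΩ (fun z => chainField.contDiffAt p q) (chainField.swap p q)
    (chainField.one_one p q) (chainField.hasFDerivAt p q) hω
end

section
/- Let p > 0, q < 0, p + q > 0, and let L > (1 − p/q)^{1/(p+q)}. Then every nonconstant periodic solution of the planar ODE ẋ = (p−q) + q·x^p y^q − p·x^q y^p, ẏ = (q−p) + p·x^p y^q − q·x^q y^p whose image lies in ℝ₊² has its image contained in the square [0,L] × [0,L]. In particular, for 0 < y < L one has (p−q) + q·L^p y^q − p·L^q y^p < 0. -/
/-! At a maximum of a coordinate along a periodic orbit, the velocity of that coordinate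
vanishes. But `ẋ < 0` wherever `x ≥ L`, and the system is reversible, `ẏ(x, y) = -ẋ(y, x)`,
so also `ẏ > 0` wherever `y ≥ L`; hence neither coordinate ever exceeds `L`. -/

open Function Set

theorem Function.Periodic.le_of_hasDerivAt_ne_zero {f f' : ℝ → ℝ} {T L : ℝ}
    (hf : Periodic f T) (hT : T ≠ 0) (hderiv : ∀ t, HasDerivAt f (f' t) t)
    (hL : ∀ t, L < f t → f' t ≠ 0) (t : ℝ) : f t ≤ L := by
  have hcont : Continuous f := continuous_iff_continuousAt.2 fun t ↦ (hderiv t).continuousAt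
  obtain ⟨_, ⟨t₀, rfl⟩, hmax⟩ :=
    (hf.compact_of_continuous hT hcont).exists_isGreatest (range_nonempty f)
  have hcrit : f' t₀ = 0 :=
    IsLocalMax.hasDerivAt_eq_zero (.of_forall fun s ↦ hmax ⟨s, rfl⟩) (hderiv t₀)
  exact (hmax ⟨t, rfl⟩).trans (not_lt.1 fun h ↦ hL t₀ h hcrit)

noncomputable def chainRate (p q x y : ℝ) : ℝ :=
  (p - q) + q * x ^ p * y ^ q - p * x ^ q * y ^ p

theorem neg_chainRate_swap (p q x y : ℝ) :
    -chainRate p q y x = (q - p) + p * x ^ p * y ^ q - q * x ^ q * y ^ p := by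
  unfold chainRate; ring

theorem chainRate_neg {p q x y : ℝ} (hp : 0 < p) (hq : q < 0) (hpq : 0 < p + q)
    (hx₀ : 0 < x) (hx : 1 - p / q < x ^ (p + q)) (hy : 0 < y) : chainRate p q x y < 0 := by
  have hpow : x ^ (p + q) = x ^ p * x ^ q := Real.rpow_add hx₀ p q
  have hlow : q * x ^ (p + q) < q - p := by
    have := mul_lt_mul_of_neg_left hx hq
    rwa [mul_sub, mul_one, mul_div_cancel₀ p hq.ne] at this
  have hxp := Real.rpow_pos_of_pos hx₀ p
  have hxq := Real.rpow_pos_of_pos hx₀ q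
  have hyp := Real.rpow_pos_of_pos hy p
  have hyq := Real.rpow_pos_of_pos hy q
  unfold chainRate
  rcases le_total y x with hyx | hxy
  · -- the term `q x^p y^q ≤ q x^(p+q)` already outweighs `p - q`
    have : x ^ q ≤ y ^ q := Real.rpow_le_rpow_of_nonpos hy hyx hq.le
    nlinarith [mul_le_mul_of_nonneg_left this hxp.le, mul_pos hxq hyp]
  · -- the term `p x^q y^p ≥ p x^(p+q) > -q x^(p+q)` outweighs `p - q`
    have : x ^ p ≤ y ^ p := Real.rpow_le_rpow hx₀.le hxy hp.le
    nlinarith [mul_le_mul_of_nonneg_left this hxq.le, mul_pos hxp hyq, mul_pos hpq (mul_pos hxp hxq)]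

/-- For p > 0 > q with p + q > 0, and L > (1 − p/q)^(1/(p+q)), every
nonconstant periodic solution in ℝ₊² of the reversible chain system stays in [0,L]²;
in particular ẋ < 0 on the segment {x = L, 0 < y < L}. -/
theorem chain_closed_orbits_bounded (p q L : ℝ)
    (hp : 0 < p) (hq : q < 0) (hpq : 0 < p + q)
    (hL : L > (1 - p / q) ^ ((1 : ℝ) / (p + q))) :
    (∀ γ : ℝ → ℝ × ℝ,
      (∀ t : ℝ, 0 < (γ t).1 ∧ 0 < (γ t).2) →
      (∀ t : ℝ, HasDerivAt γ
        ((p - q) + q * (γ t).1 ^ p * (γ t).2 ^ q - p * (γ t).1 ^ q * (γ t).2 ^ p,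
         (q - p) + p * (γ t).1 ^ p * (γ t).2 ^ q - q * (γ t).1 ^ q * (γ t).2 ^ p) t) →
      (∃ T : ℝ, 0 < T ∧ ∀ t : ℝ, γ (t + T) = γ t) →
      (∃ s t : ℝ, γ s ≠ γ t) →
      ∀ t : ℝ, 0 ≤ (γ t).1 ∧ (γ t).1 ≤ L ∧ 0 ≤ (γ t).2 ∧ (γ t).2 ≤ L) ∧
    (∀ y : ℝ, 0 < y → y < L →
      (p - q) + q * L ^ p * y ^ q - p * L ^ q * y ^ p < 0) := by
  have hb : 0 < 1 - p / q := by linarith [div_neg_of_pos_of_neg hp hq]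
  have hL₀ : 0 < L := (Real.rpow_pos_of_pos hb _).trans hL
  have hLb : 1 - p / q < L ^ (p + q) := by
    rwa [gt_iff_lt, one_div, Real.rpow_inv_lt_iff_of_pos hb.le hL₀.le hpq] at hL
  have rate_neg : ∀ x y, L ≤ x → 0 < y → chainRate p q x y < 0 := fun x y hx hy ↦
    chainRate_neg hp hq hpq (hL₀.trans_le hx)
      (hLb.trans_le (Real.rpow_le_rpow hL₀.le hx hpq.le)) hy
  refine ⟨fun γ hpos hderiv ⟨T, hT, hper⟩ _ t ↦ ?_, fun y hy _ ↦ rate_neg L y le_rfl hy⟩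
  have hx : (γ t).1 ≤ L :=
    Periodic.le_of_hasDerivAt_ne_zero (fun t ↦ congrArg Prod.fst (hper t)) hT.ne'
      (fun t ↦ (hderiv t).fst) (fun t ht ↦ (rate_neg _ _ ht.le (hpos t).2).ne) t
  have hy : (γ t).2 ≤ L :=
    Periodic.le_of_hasDerivAt_ne_zero (fun t ↦ congrArg Prod.snd (hper t)) hT.ne'
      (fun t ↦ (hderiv t).snd) (fun t ht ↦ by
        rw [← neg_chainRate_swap]; exact (neg_pos.2 (rate_neg _ _ ht.le (hpos t).1)).ne') t
  exact ⟨(hpos t).1.le, hx, (hpos t).2.le, hy⟩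
end

section
/- Consider the mass-action ODE of three reactions, ẋ = c₁κ₁x^{a₁}y^{b₁} + c₂κ₂x^{a₂}y^{b₂} + c₃κ₃x^{a₃}y^{b₃}, ẏ = d₁κ₁x^{a₁}y^{b₁} + d₂κ₂x^{a₂}y^{b₂} + d₃κ₃x^{a₃}y^{b₃} with κ₁,κ₂,κ₃ > 0, under the non-degeneracy assumptions that (a₁,b₁), (a₂,b₂), (a₃,b₃) do not lie on a line, none of (c₁,d₁), (c₂,d₂), (c₃,d₃) is (0,0), and (c₁,d₁), (c₂,d₂), (c₃,d₃) span ℝ². Then: (1) a point (x̄,ȳ) ∈ ℝ₊² is an equilibrium if and only if (c₁d₂−c₂d₁)κ₁x̄^{a₁}ȳ^{b₁} = (c₂d₃−c₃d₂)κ₃x̄^{a₃}ȳ^{b₃} and (c₃d₁−c₁d₃)κ₁x̄^{a₁}ȳ^{b₁} = (c₂d₃−c₃d₂)κ₂x̄^{a₂}ȳ^{b₂}; (2) there exists a positive equilibrium if and only if sgn(c₂d₃−c₃d₂) = sgn(c₃d₁−c₁d₃) = sgn(c₁d₂−c₂d₁) ≠ 0; and (3) if a positive equilibrium exists, it is unique.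 -/
/-!
Write `Mᵢ = κᵢ x^aᵢ y^bᵢ` and let `Δ = (Δ₁, Δ₂, Δ₃)` be the vector of `2 × 2` minors of the matrix
with columns `(cᵢ, dᵢ)`. The equilibrium equations say that `M` lies in the kernel of this matrix,
which has rank `2` and is therefore the line through `Δ`. As `M` is positive, this forces the `Δᵢ`
to share one strict sign, and dividing `Δᵢ M₁ = Δ₁ Mᵢ` by `Δ₁ κᵢ x^a₁ y^b₁` leaves the monomial
equations `x^(aᵢ - a₁) y^(bᵢ - b₁) = (Δᵢ / Δ₁) (κ₁ / κᵢ)` for `i = 2, 3`. In the coordinates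
`(log x, log y)` they form a linear system whose determinant is nonzero exactly because the
exponent vectors `(aᵢ, bᵢ)` are not collinear, so it has exactly one solution.
-/

open Real

lemma exists_cross_ne_zero_of_span_eq_top {s : Set (ℝ × ℝ)} (hs : Submodule.span ℝ s = ⊤) :
    ∃ u ∈ s, ∃ v ∈ s, u.1 * v.2 - u.2 * v.1 ≠ 0 := by
  by_contra! h
  let B : ℝ × ℝ →ₗ[ℝ] ℝ × ℝ →ₗ[ℝ] ℝ := LinearMap.mk₂ ℝ (fun u v => u.1 * v.2 - u.2 * v.1)
    (fun _ _ _ => by simp only [Prod.fst_add, Prod.snd_add]; ring)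
    (fun _ _ _ => by simp only [Prod.smul_fst, Prod.smul_snd, smul_eq_mul]; ring)
    (fun _ _ _ => by simp only [Prod.fst_add, Prod.snd_add]; ring)
    (fun _ _ _ => by simp only [Prod.smul_fst, Prod.smul_snd, smul_eq_mul]; ring)
  have hB : B = 0 := LinearMap.ext_on hs fun u hu => LinearMap.ext_on hs fun v hv => h u hu v hv
  simpa [B] using LinearMap.congr_fun₂ hB (1, 0) (0, 1)

lemma not_cross_eq_zero_of_span_eq_top {c₁ d₁ c₂ d₂ c₃ d₃ : ℝ}
    (h : Submodule.span ℝ ({(c₁, d₁), (c₂, d₂), (c₃, d₃)} : Set (ℝ × ℝ)) = ⊤) :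
    ¬(c₂ * d₃ - c₃ * d₂ = 0 ∧ c₃ * d₁ - c₁ * d₃ = 0 ∧ c₁ * d₂ - c₂ * d₁ = 0) := by
  rintro ⟨h₁, h₂, h₃⟩
  obtain ⟨u, hu, v, hv, huv⟩ := exists_cross_ne_zero_of_span_eq_top h
  simp only [Set.mem_insert_iff, Set.mem_singleton_iff] at hu hv
  rcases hu with rfl | rfl | rfl <;> rcases hv with rfl | rfl | rfl <;> exact huv (by linarith)

lemma first_ne_zero_of_proportional {Δ₁ Δ₂ Δ₃ M₁ M₂ M₃ : ℝ}
    (hΔ : ¬(Δ₁ = 0 ∧ Δ₂ = 0 ∧ Δ₃ = 0)) (hM₁ : M₁ ≠ 0)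
    (h₃ : Δ₃ * M₁ = Δ₁ * M₃) (h₂ : Δ₂ * M₁ = Δ₁ * M₂) : Δ₁ ≠ 0 := by
  rintro rfl
  simp only [zero_mul, mul_eq_zero, hM₁, or_false] at h₂ h₃
  exact hΔ ⟨rfl, h₂, h₃⟩

lemma lin_combs_eq_zero_iff_proportional_minors {c₁ d₁ c₂ d₂ c₃ d₃ M₁ M₂ M₃ : ℝ}
    (hΔ : ¬(c₂ * d₃ - c₃ * d₂ = 0 ∧ c₃ * d₁ - c₁ * d₃ = 0 ∧ c₁ * d₂ - c₂ * d₁ = 0))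
    (hM₁ : M₁ ≠ 0) :
    (c₁ * M₁ + c₂ * M₂ + c₃ * M₃ = 0 ∧ d₁ * M₁ + d₂ * M₂ + d₃ * M₃ = 0) ↔
      ((c₁ * d₂ - c₂ * d₁) * M₁ = (c₂ * d₃ - c₃ * d₂) * M₃ ∧
        (c₃ * d₁ - c₁ * d₃) * M₁ = (c₂ * d₃ - c₃ * d₂) * M₂) := by
  refine ⟨fun ⟨h₁, h₂⟩ => ⟨by linear_combination d₂ * h₁ - c₂ * h₂,
    by linear_combination c₃ * h₂ - d₃ * h₁⟩, fun ⟨h₃, h₂⟩ => ?_⟩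
  have hΔ₁ := first_ne_zero_of_proportional hΔ hM₁ h₃ h₂
  constructor <;> refine mul_left_cancel₀ hΔ₁ ?_
  · linear_combination -c₂ * h₂ - c₃ * h₃
  · linear_combination -d₂ * h₂ - d₃ * h₃

lemma collinear_of_cross_sub_eq_zero {p₁ p₂ p₃ : ℝ × ℝ}
    (h : (p₂.1 - p₁.1) * (p₃.2 - p₁.2) - (p₂.2 - p₁.2) * (p₃.1 - p₁.1) = 0) :
    Collinear ℝ {p₁, p₂, p₃} := by
  by_cases hp : p₂ = p₁
  · rw [hp, Set.insert_eq_of_mem (Set.mem_insert _ _)]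
    exact collinear_pair ℝ p₁ p₃
  rw [Set.pair_comm, Set.insert_comm]
  apply collinear_insert_of_mem_affineSpan_pair
  have hn : (p₂.1 - p₁.1) ^ 2 + (p₂.2 - p₁.2) ^ 2 ≠ 0 := by
    intro h0
    apply hp
    ext <;> nlinarith [sq_nonneg (p₂.1 - p₁.1), sq_nonneg (p₂.2 - p₁.2)]
  -- the parameter of the orthogonal projection of `p₃` onto the line through `p₁` and `p₂`
  convert AffineMap.lineMap_mem_affineSpan_pair
    (((p₂.1 - p₁.1) * (p₃.1 - p₁.1) + (p₂.2 - p₁.2) * (p₃.2 - p₁.2)) /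
      ((p₂.1 - p₁.1) ^ 2 + (p₂.2 - p₁.2) ^ 2)) p₁ p₂
  simp only [AffineMap.lineMap_apply_module', Prod.ext_iff, Prod.fst_add, Prod.snd_add,
    Prod.smul_fst, Prod.smul_snd, Prod.fst_sub, Prod.snd_sub, smul_eq_mul]
  constructor <;> field_simp
  · linear_combination (p₁.2 - p₂.2) * h
  · linear_combination (p₂.1 - p₁.1) * h

lemma sign_eq_sign_of_mul_eq_mul {a b m n : ℝ} (hm : 0 < m) (hn : 0 < n) (h : a * m = b * n) :
    Real.sign a = Real.sign b := by
  rcases lt_trichotomy a 0 with ha | rfl | ha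
  · rw [sign_of_neg ha, sign_of_neg (by nlinarith)]
  · rw [(mul_eq_zero.1 (h.symm.trans (zero_mul m))).resolve_right hn.ne']
  · rw [sign_of_pos ha, sign_of_pos (by nlinarith)]

lemma div_pos_of_sign_eq {a b : ℝ} (h : Real.sign a = Real.sign b) (hb : b ≠ 0) : 0 < a / b := by
  unfold Real.sign at h
  split_ifs at h <;> norm_num at h
  · exact div_pos_of_neg_of_neg ‹_› ‹_›
  · exact div_pos ‹_› ‹_›
  · exact absurd (by linarith : b = 0) hb

lemma rpow_mul_rpow_eq_iff {x y p q α : ℝ} (hx : 0 < x) (hy : 0 < y) (hα : 0 < α) :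
    x ^ p * y ^ q = α ↔ p * log x + q * log y = log α := by
  rw [← log_injOn_pos.eq_iff (Set.mem_Ioi.2 (by positivity)) hα, log_mul (by positivity)
    (by positivity), log_rpow hx, log_rpow hy]

lemma existsUnique_rpow_mul_rpow_eq {p q r s α β : ℝ} (hdet : p * s - q * r ≠ 0) (hα : 0 < α)
    (hβ : 0 < β) :
    ∃! z : ℝ × ℝ, 0 < z.1 ∧ 0 < z.2 ∧ z.1 ^ p * z.2 ^ q = α ∧ z.1 ^ r * z.2 ^ s = β := by
  set u := (s * log α - q * log β) / (p * s - q * r)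
  set v := (p * log β - r * log α) / (p * s - q * r)
  refine ⟨(exp u, exp v), ⟨exp_pos u, exp_pos v, ?_, ?_⟩, ?_⟩
  · rw [rpow_mul_rpow_eq_iff (exp_pos u) (exp_pos v) hα, log_exp, log_exp]
    simp only [u, v, div_eq_mul_inv]
    linear_combination log α * mul_inv_cancel₀ hdet
  · rw [rpow_mul_rpow_eq_iff (exp_pos u) (exp_pos v) hβ, log_exp, log_exp]
    simp only [u, v, div_eq_mul_inv]
    linear_combination log β * mul_inv_cancel₀ hdet
  · rintro z ⟨hx, hy, h₁, h₂⟩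
    rw [rpow_mul_rpow_eq_iff hx hy hα] at h₁
    rw [rpow_mul_rpow_eq_iff hx hy hβ] at h₂
    have hu : log z.1 = u := by
      rw [eq_div_iff hdet]
      linear_combination s * h₁ - q * h₂
    have hv : log z.2 = v := by
      rw [eq_div_iff hdet]
      linear_combination p * h₂ - r * h₁
    exact Prod.ext (by rw [← exp_log hx, hu]) (by rw [← exp_log hy, hv])

lemma mul_monomial_eq_mul_monomial_iff {Δ Δ' κ κ' x y a b a' b' : ℝ} (hx : 0 < x) (hy : 0 < y)
    (hκ' : κ' ≠ 0) (hΔ' : Δ' ≠ 0) :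
    Δ * (κ * x ^ a * y ^ b) = Δ' * (κ' * x ^ a' * y ^ b') ↔
      x ^ (a' - a) * y ^ (b' - b) = Δ / Δ' * (κ / κ') := by
  rw [rpow_sub hx, rpow_sub hy]
  have hxa : 0 < x ^ a := by positivity
  have hyb : 0 < y ^ b := by positivity
  field_simp
  exact eq_comm

section

variable {a₁ b₁ a₂ b₂ a₃ b₃ c₁ d₁ c₂ d₂ c₃ d₃ κ₁ κ₂ κ₃ x y : ℝ}

lemma equilibrium_iff_binomial
    (hΔ : ¬(c₂ * d₃ - c₃ * d₂ = 0 ∧ c₃ * d₁ - c₁ * d₃ = 0 ∧ c₁ * d₂ - c₂ * d₁ = 0))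
    (hκ₁ : 0 < κ₁) (hx : 0 < x) (hy : 0 < y) :
    (c₁ * κ₁ * x ^ a₁ * y ^ b₁ + c₂ * κ₂ * x ^ a₂ * y ^ b₂ + c₃ * κ₃ * x ^ a₃ * y ^ b₃ = 0 ∧
      d₁ * κ₁ * x ^ a₁ * y ^ b₁ + d₂ * κ₂ * x ^ a₂ * y ^ b₂ + d₃ * κ₃ * x ^ a₃ * y ^ b₃ = 0) ↔
      ((c₁ * d₂ - c₂ * d₁) * (κ₁ * x ^ a₁ * y ^ b₁)
          = (c₂ * d₃ - c₃ * d₂) * (κ₃ * x ^ a₃ * y ^ b₃) ∧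
        (c₃ * d₁ - c₁ * d₃) * (κ₁ * x ^ a₁ * y ^ b₁)
          = (c₂ * d₃ - c₃ * d₂) * (κ₂ * x ^ a₂ * y ^ b₂)) := by
  simpa only [mul_assoc] using lin_combs_eq_zero_iff_proportional_minors
    (M₂ := κ₂ * x ^ a₂ * y ^ b₂) (M₃ := κ₃ * x ^ a₃ * y ^ b₃) hΔ
    (by positivity : κ₁ * x ^ a₁ * y ^ b₁ ≠ 0)

lemma binomial_iff_monomial (hΔ₁ : c₂ * d₃ - c₃ * d₂ ≠ 0) (hκ₂ : κ₂ ≠ 0) (hκ₃ : κ₃ ≠ 0)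
    (hx : 0 < x) (hy : 0 < y) :
    ((c₁ * d₂ - c₂ * d₁) * (κ₁ * x ^ a₁ * y ^ b₁)
          = (c₂ * d₃ - c₃ * d₂) * (κ₃ * x ^ a₃ * y ^ b₃) ∧
        (c₃ * d₁ - c₁ * d₃) * (κ₁ * x ^ a₁ * y ^ b₁)
          = (c₂ * d₃ - c₃ * d₂) * (κ₂ * x ^ a₂ * y ^ b₂)) ↔
      (x ^ (a₂ - a₁) * y ^ (b₂ - b₁) = (c₃ * d₁ - c₁ * d₃) / (c₂ * d₃ - c₃ * d₂) * (κ₁ / κ₂) ∧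
        x ^ (a₃ - a₁) * y ^ (b₃ - b₁) = (c₁ * d₂ - c₂ * d₁) / (c₂ * d₃ - c₃ * d₂) * (κ₁ / κ₃)) := by
  rw [mul_monomial_eq_mul_monomial_iff hx hy hκ₃ hΔ₁,
    mul_monomial_eq_mul_monomial_iff hx hy hκ₂ hΔ₁]
  exact and_comm

end

theorem three_reactions_equilibria_general
    (a₁ b₁ a₂ b₂ a₃ b₃ c₁ d₁ c₂ d₂ c₃ d₃ : ℝ) (κ₁ κ₂ κ₃ : ℝ)
    (hκ₁ : 0 < κ₁) (hκ₂ : 0 < κ₂) (hκ₃ : 0 < κ₃)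
    (hline : ¬ Collinear ℝ ({(a₁, b₁), (a₂, b₂), (a₃, b₃)} : Set (ℝ × ℝ)))
    (hspan : Submodule.span ℝ ({(c₁, d₁), (c₂, d₂), (c₃, d₃)} : Set (ℝ × ℝ)) = ⊤) :
    (∀ x y : ℝ, 0 < x → 0 < y →
      ((c₁ * κ₁ * x ^ a₁ * y ^ b₁ + c₂ * κ₂ * x ^ a₂ * y ^ b₂
          + c₃ * κ₃ * x ^ a₃ * y ^ b₃ = 0 ∧
        d₁ * κ₁ * x ^ a₁ * y ^ b₁ + d₂ * κ₂ * x ^ a₂ * y ^ b₂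
          + d₃ * κ₃ * x ^ a₃ * y ^ b₃ = 0) ↔
       ((c₁ * d₂ - c₂ * d₁) * (κ₁ * x ^ a₁ * y ^ b₁)
          = (c₂ * d₃ - c₃ * d₂) * (κ₃ * x ^ a₃ * y ^ b₃) ∧
        (c₃ * d₁ - c₁ * d₃) * (κ₁ * x ^ a₁ * y ^ b₁)
          = (c₂ * d₃ - c₃ * d₂) * (κ₂ * x ^ a₂ * y ^ b₂)))) ∧
    ((∃ p : ℝ × ℝ, 0 < p.1 ∧ 0 < p.2 ∧
        c₁ * κ₁ * p.1 ^ a₁ * p.2 ^ b₁ + c₂ * κ₂ * p.1 ^ a₂ * p.2 ^ b₂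
          + c₃ * κ₃ * p.1 ^ a₃ * p.2 ^ b₃ = 0 ∧
        d₁ * κ₁ * p.1 ^ a₁ * p.2 ^ b₁ + d₂ * κ₂ * p.1 ^ a₂ * p.2 ^ b₂
          + d₃ * κ₃ * p.1 ^ a₃ * p.2 ^ b₃ = 0) ↔
      (Real.sign (c₂ * d₃ - c₃ * d₂) = Real.sign (c₃ * d₁ - c₁ * d₃) ∧
       Real.sign (c₃ * d₁ - c₁ * d₃) = Real.sign (c₁ * d₂ - c₂ * d₁) ∧
       Real.sign (c₂ * d₃ - c₃ * d₂) ≠ 0)) ∧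
    (∀ p q : ℝ × ℝ,
      (0 < p.1 ∧ 0 < p.2 ∧
        c₁ * κ₁ * p.1 ^ a₁ * p.2 ^ b₁ + c₂ * κ₂ * p.1 ^ a₂ * p.2 ^ b₂
          + c₃ * κ₃ * p.1 ^ a₃ * p.2 ^ b₃ = 0 ∧
        d₁ * κ₁ * p.1 ^ a₁ * p.2 ^ b₁ + d₂ * κ₂ * p.1 ^ a₂ * p.2 ^ b₂
          + d₃ * κ₃ * p.1 ^ a₃ * p.2 ^ b₃ = 0) →
      (0 < q.1 ∧ 0 < q.2 ∧
        c₁ * κ₁ * q.1 ^ a₁ * q.2 ^ b₁ + c₂ * κ₂ * q.1 ^ a₂ * q.2 ^ b₂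
          + c₃ * κ₃ * q.1 ^ a₃ * q.2 ^ b₃ = 0 ∧
        d₁ * κ₁ * q.1 ^ a₁ * q.2 ^ b₁ + d₂ * κ₂ * q.1 ^ a₂ * q.2 ^ b₂
          + d₃ * κ₃ * q.1 ^ a₃ * q.2 ^ b₃ = 0) →
      p = q) := by
  have hdet : (a₂ - a₁) * (b₃ - b₁) - (b₂ - b₁) * (a₃ - a₁) ≠ 0 :=
    fun h => hline (collinear_of_cross_sub_eq_zero h)
  have hΔ := not_cross_eq_zero_of_span_eq_top hspan
  refine ⟨fun x y hx hy => equilibrium_iff_binomial hΔ hκ₁ hx hy, ⟨?_, ?_⟩, ?_⟩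
  · rintro ⟨p, hp₁, hp₂, hp⟩
    obtain ⟨h₃, h₂⟩ := (equilibrium_iff_binomial hΔ hκ₁ hp₁ hp₂).1 hp
    have hΔ₁ := first_ne_zero_of_proportional hΔ (by positivity) h₃ h₂
    have hs₂ := sign_eq_sign_of_mul_eq_mul (by positivity) (by positivity) h₂
    have hs₃ := sign_eq_sign_of_mul_eq_mul (by positivity) (by positivity) h₃
    exact ⟨hs₂.symm, hs₂.trans hs₃.symm, mt Real.sign_eq_zero_iff.1 hΔ₁⟩
  · rintro ⟨hs₂, hs₃, hs₁⟩
    have hΔ₁ : c₂ * d₃ - c₃ * d₂ ≠ 0 := mt Real.sign_eq_zero_iff.2 hs₁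
    obtain ⟨p, ⟨hp₁, hp₂, hp⟩, -⟩ := existsUnique_rpow_mul_rpow_eq hdet
      (mul_pos (div_pos_of_sign_eq hs₂.symm hΔ₁) (div_pos hκ₁ hκ₂))
      (mul_pos (div_pos_of_sign_eq (hs₂.trans hs₃).symm hΔ₁) (div_pos hκ₁ hκ₃))
    exact ⟨p, hp₁, hp₂, (equilibrium_iff_binomial hΔ hκ₁ hp₁ hp₂).2
      ((binomial_iff_monomial hΔ₁ hκ₂.ne' hκ₃.ne' hp₁ hp₂).2 hp)⟩
  · rintro p q ⟨hp₁, hp₂, hp⟩ ⟨hq₁, hq₂, hq⟩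
    obtain ⟨h₃, h₂⟩ := (equilibrium_iff_binomial hΔ hκ₁ hp₁ hp₂).1 hp
    have hΔ₁ := first_ne_zero_of_proportional hΔ (by positivity) h₃ h₂
    obtain ⟨hp₂₁, hp₃₁⟩ := (binomial_iff_monomial hΔ₁ hκ₂.ne' hκ₃.ne' hp₁ hp₂).1 ⟨h₃, h₂⟩
    obtain ⟨hq₂₁, hq₃₁⟩ := (binomial_iff_monomial hΔ₁ hκ₂.ne' hκ₃.ne' hq₁ hq₂).1
      ((equilibrium_iff_binomial hΔ hκ₁ hq₁ hq₂).1 hq)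
    exact (existsUnique_rpow_mul_rpow_eq hdet (hp₂₁ ▸ by positivity)
      (hp₃₁ ▸ by positivity)).unique ⟨hp₁, hp₂, hp₂₁, hp₃₁⟩ ⟨hq₁, hq₂, hq₂₁, hq₃₁⟩

/-- Equilibria of the mass-action system of three reactions: the binomial
characterization, the sign criterion for existence, and uniqueness. -/
theorem three_reactions_equilibria
    (a₁ b₁ a₂ b₂ a₃ b₃ c₁ d₁ c₂ d₂ c₃ d₃ : ℝ) (κ₁ κ₂ κ₃ : ℝ)
    (hκ₁ : 0 < κ₁) (hκ₂ : 0 < κ₂) (hκ₃ : 0 < κ₃)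
    (hline : ¬ Collinear ℝ ({(a₁, b₁), (a₂, b₂), (a₃, b₃)} : Set (ℝ × ℝ)))
    (hc₁ : ((c₁, d₁) : ℝ × ℝ) ≠ 0) (hc₂ : ((c₂, d₂) : ℝ × ℝ) ≠ 0)
    (hc₃ : ((c₃, d₃) : ℝ × ℝ) ≠ 0)
    (hspan : Submodule.span ℝ ({(c₁, d₁), (c₂, d₂), (c₃, d₃)} : Set (ℝ × ℝ)) = ⊤) :
    (∀ x y : ℝ, 0 < x → 0 < y →
      ((c₁ * κ₁ * x ^ a₁ * y ^ b₁ + c₂ * κ₂ * x ^ a₂ * y ^ b₂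
          + c₃ * κ₃ * x ^ a₃ * y ^ b₃ = 0 ∧
        d₁ * κ₁ * x ^ a₁ * y ^ b₁ + d₂ * κ₂ * x ^ a₂ * y ^ b₂
          + d₃ * κ₃ * x ^ a₃ * y ^ b₃ = 0) ↔
       ((c₁ * d₂ - c₂ * d₁) * (κ₁ * x ^ a₁ * y ^ b₁)
          = (c₂ * d₃ - c₃ * d₂) * (κ₃ * x ^ a₃ * y ^ b₃) ∧
        (c₃ * d₁ - c₁ * d₃) * (κ₁ * x ^ a₁ * y ^ b₁)
          = (c₂ * d₃ - c₃ * d₂) * (κ₂ * x ^ a₂ * y ^ b₂)))) ∧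
    ((∃ p : ℝ × ℝ, 0 < p.1 ∧ 0 < p.2 ∧
        c₁ * κ₁ * p.1 ^ a₁ * p.2 ^ b₁ + c₂ * κ₂ * p.1 ^ a₂ * p.2 ^ b₂
          + c₃ * κ₃ * p.1 ^ a₃ * p.2 ^ b₃ = 0 ∧
        d₁ * κ₁ * p.1 ^ a₁ * p.2 ^ b₁ + d₂ * κ₂ * p.1 ^ a₂ * p.2 ^ b₂
          + d₃ * κ₃ * p.1 ^ a₃ * p.2 ^ b₃ = 0) ↔
      (Real.sign (c₂ * d₃ - c₃ * d₂) = Real.sign (c₃ * d₁ - c₁ * d₃) ∧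
       Real.sign (c₃ * d₁ - c₁ * d₃) = Real.sign (c₁ * d₂ - c₂ * d₁) ∧
       Real.sign (c₂ * d₃ - c₃ * d₂) ≠ 0)) ∧
    (∀ p q : ℝ × ℝ,
      (0 < p.1 ∧ 0 < p.2 ∧
        c₁ * κ₁ * p.1 ^ a₁ * p.2 ^ b₁ + c₂ * κ₂ * p.1 ^ a₂ * p.2 ^ b₂
          + c₃ * κ₃ * p.1 ^ a₃ * p.2 ^ b₃ = 0 ∧
        d₁ * κ₁ * p.1 ^ a₁ * p.2 ^ b₁ + d₂ * κ₂ * p.1 ^ a₂ * p.2 ^ b₂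
          + d₃ * κ₃ * p.1 ^ a₃ * p.2 ^ b₃ = 0) →
      (0 < q.1 ∧ 0 < q.2 ∧
        c₁ * κ₁ * q.1 ^ a₁ * q.2 ^ b₁ + c₂ * κ₂ * q.1 ^ a₂ * q.2 ^ b₂
          + c₃ * κ₃ * q.1 ^ a₃ * q.2 ^ b₃ = 0 ∧
        d₁ * κ₁ * q.1 ^ a₁ * q.2 ^ b₁ + d₂ * κ₂ * q.1 ^ a₂ * q.2 ^ b₂
          + d₃ * κ₃ * q.1 ^ a₃ * q.2 ^ b₃ = 0) →
      p = q) :=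
  three_reactions_equilibria_general a₁ b₁ a₂ b₂ a₃ b₃ c₁ d₁ c₂ d₂ c₃ d₃ κ₁ κ₂ κ₃ hκ₁ hκ₂ hκ₃ hline
    hspan
end

section
/- Consider the scaled three-reaction ODE ẋ = f(x,y) = c₁κ̄₁x^{a₁}y^{b₁} + c₂κ̄₂x^{a₂}y^{b₂} + c₃κ̄₃x^{a₃}y^{b₃}, ẏ = g(x,y) = K(d₁κ̄₁x^{a₁}y^{b₁} + d₂κ̄₂x^{a₂}y^{b₂} + d₃κ̄₃x^{a₃}y^{b₃}), where K ≠ 0 and κ̄₁ = λ(c₂d₃−c₃d₂), κ̄₂ = λ(c₃d₁−c₁d₃), κ̄₃ = λ(c₁d₂−c₂d₁) for some λ ≠ 0. Then the determinant of the Jacobian matrix of (f,g) at (1,1) equals (1/λ)·K·κ̄₁κ̄₂κ̄₃·[a₁(b₂−b₃) + a₂(b₃−b₁) + a₃(b₁−b₂)]. -/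
theorem Real.hasDerivAt_rpow_const_one (e : ℝ) : HasDerivAt (fun x : ℝ => x ^ e) e 1 := by
  simpa using Real.hasDerivAt_rpow_const (x := 1) (p := e) (Or.inl one_ne_zero)

theorem Real.deriv_three_monomials_at_one (p q r e f g : ℝ) :
    deriv (fun x : ℝ => p * x ^ e + q * x ^ f + r * x ^ g) 1 = p * e + q * f + r * g :=
  ((((Real.hasDerivAt_rpow_const_one e).const_mul p).add
    ((Real.hasDerivAt_rpow_const_one f).const_mul q)).add
    ((Real.hasDerivAt_rpow_const_one g).const_mul r)).deriv

/- By Cauchy–Binet the left side is `∑_{i<j} κᵢκⱼ (cᵢdⱼ - cⱼdᵢ)(aᵢbⱼ - aⱼbᵢ)`, and each minor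
`cᵢdⱼ - cⱼdᵢ` is `±κₖ / lam` for the remaining index `k`. -/
theorem det_weighted_moments_eq (a₁ b₁ a₂ b₂ a₃ b₃ c₁ d₁ c₂ d₂ c₃ d₃ lam : ℝ) (hlam : lam ≠ 0) :
    let κ₁ := lam * (c₂ * d₃ - c₃ * d₂)
    let κ₂ := lam * (c₃ * d₁ - c₁ * d₃)
    let κ₃ := lam * (c₁ * d₂ - c₂ * d₁)
    (c₁ * κ₁ * a₁ + c₂ * κ₂ * a₂ + c₃ * κ₃ * a₃) * (d₁ * κ₁ * b₁ + d₂ * κ₂ * b₂ + d₃ * κ₃ * b₃)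
      - (c₁ * κ₁ * b₁ + c₂ * κ₂ * b₂ + c₃ * κ₃ * b₃)
        * (d₁ * κ₁ * a₁ + d₂ * κ₂ * a₂ + d₃ * κ₃ * a₃)
      = 1 / lam * (κ₁ * κ₂ * κ₃) * (a₁ * (b₂ - b₃) + a₂ * (b₃ - b₁) + a₃ * (b₁ - b₂)) := by
  intro κ₁ κ₂ κ₃
  field_simp
  ring

theorem three_reactions_det_jacobian_general
    (a₁ b₁ a₂ b₂ a₃ b₃ c₁ d₁ c₂ d₂ c₃ d₃ : ℝ) (K lam : ℝ) (hlam : lam ≠ 0)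
    (κ₁ κ₂ κ₃ : ℝ)
    (hκ₁ : κ₁ = lam * (c₂ * d₃ - c₃ * d₂))
    (hκ₂ : κ₂ = lam * (c₃ * d₁ - c₁ * d₃))
    (hκ₃ : κ₃ = lam * (c₁ * d₂ - c₂ * d₁)) :
    deriv (fun x : ℝ => c₁ * κ₁ * x ^ a₁ * (1 : ℝ) ^ b₁
        + c₂ * κ₂ * x ^ a₂ * (1 : ℝ) ^ b₂ + c₃ * κ₃ * x ^ a₃ * (1 : ℝ) ^ b₃) 1
      * deriv (fun y : ℝ => K * (d₁ * κ₁ * (1 : ℝ) ^ a₁ * y ^ b₁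
        + d₂ * κ₂ * (1 : ℝ) ^ a₂ * y ^ b₂ + d₃ * κ₃ * (1 : ℝ) ^ a₃ * y ^ b₃)) 1
    - deriv (fun y : ℝ => c₁ * κ₁ * (1 : ℝ) ^ a₁ * y ^ b₁
        + c₂ * κ₂ * (1 : ℝ) ^ a₂ * y ^ b₂ + c₃ * κ₃ * (1 : ℝ) ^ a₃ * y ^ b₃) 1
      * deriv (fun x : ℝ => K * (d₁ * κ₁ * x ^ a₁ * (1 : ℝ) ^ b₁
        + d₂ * κ₂ * x ^ a₂ * (1 : ℝ) ^ b₂ + d₃ * κ₃ * x ^ a₃ * (1 : ℝ) ^ b₃)) 1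
    = (1 / lam) * K * (κ₁ * κ₂ * κ₃)
        * (a₁ * (b₂ - b₃) + a₂ * (b₃ - b₁) + a₃ * (b₁ - b₂)) := by
  simp only [Real.one_rpow, mul_one, deriv_const_mul_field, Real.deriv_three_monomials_at_one]
  subst hκ₁ hκ₂ hκ₃
  linear_combination K * det_weighted_moments_eq a₁ b₁ a₂ b₂ a₃ b₃ c₁ d₁ c₂ d₂ c₃ d₃ lam hlam

/-- The determinant of the Jacobian of the scaled three-reaction system
at (1,1) equals (1/λ)·K·κ̄₁κ̄₂κ̄₃·[a₁(b₂−b₃) + a₂(b₃−b₁) + a₃(b₁−b₂)]. -/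
theorem three_reactions_det_jacobian
    (a₁ b₁ a₂ b₂ a₃ b₃ c₁ d₁ c₂ d₂ c₃ d₃ : ℝ) (K lam : ℝ) (hK : K ≠ 0) (hlam : lam ≠ 0)
    (κ₁ κ₂ κ₃ : ℝ)
    (hκ₁ : κ₁ = lam * (c₂ * d₃ - c₃ * d₂))
    (hκ₂ : κ₂ = lam * (c₃ * d₁ - c₁ * d₃))
    (hκ₃ : κ₃ = lam * (c₁ * d₂ - c₂ * d₁)) :
    deriv (fun x : ℝ => c₁ * κ₁ * x ^ a₁ * (1 : ℝ) ^ b₁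
        + c₂ * κ₂ * x ^ a₂ * (1 : ℝ) ^ b₂ + c₃ * κ₃ * x ^ a₃ * (1 : ℝ) ^ b₃) 1
      * deriv (fun y : ℝ => K * (d₁ * κ₁ * (1 : ℝ) ^ a₁ * y ^ b₁
        + d₂ * κ₂ * (1 : ℝ) ^ a₂ * y ^ b₂ + d₃ * κ₃ * (1 : ℝ) ^ a₃ * y ^ b₃)) 1
    - deriv (fun y : ℝ => c₁ * κ₁ * (1 : ℝ) ^ a₁ * y ^ b₁
        + c₂ * κ₂ * (1 : ℝ) ^ a₂ * y ^ b₂ + c₃ * κ₃ * (1 : ℝ) ^ a₃ * y ^ b₃) 1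
      * deriv (fun x : ℝ => K * (d₁ * κ₁ * x ^ a₁ * (1 : ℝ) ^ b₁
        + d₂ * κ₂ * x ^ a₂ * (1 : ℝ) ^ b₂ + d₃ * κ₃ * x ^ a₃ * (1 : ℝ) ^ b₃)) 1
    = (1 / lam) * K * (κ₁ * κ₂ * κ₃)
        * (a₁ * (b₂ - b₃) + a₂ * (b₃ - b₁) + a₃ * (b₁ - b₂)) :=
  three_reactions_det_jacobian_general a₁ b₁ a₂ b₂ a₃ b₃ c₁ d₁ c₂ d₂ c₃ d₃ K lam hlam κ₁ κ₂ κ₃ hκ₁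
    hκ₂ hκ₃
end

section
/- Let c₁, c₂, c₃, d₁, d₂, d₃, K, λ be real numbers with λ ≠ 0 and K ≠ 0, and set κ̄₁ = λ(c₂d₃−c₃d₂), κ̄₂ = λ(c₃d₁−c₁d₃), κ̄₃ = λ(c₁d₂−c₂d₁). Assume κ̄₁κ̄₂κ̄₃ ≠ 0 and c₁κ̄₁ = Kd₂κ̄₂ = 4Kd₃κ̄₃ ≠ 0. Define, for x > −1, F(x) = −c₁κ̄₁x − Kd₂κ̄₂[(x+1)^{−1/2} − 1] − Kd₃κ̄₃[(x+1)^{−2} − 1] and G(x) = (1/λ)Kκ̄₁κ̄₂κ̄₃[2(x+1)^{1/2} + (x+1)^{−1} − 3], and set α = −(λ²/4)·c₁κ̄₁/(Kκ̄₁κ̄₂κ̄₃)² and β = −(3λ/2)·c₁κ̄₁/(Kκ̄₁κ̄₂κ̄₃). Then F(x) = α·G(x)² + β·G(x) for all x > −1. -/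
/-!
With `t = √(x+1)`, `s = c₁κ₁` and `M = Kκ₁κ₂κ₃`, the relations `Kd₂κ₂ = s`, `Kd₃κ₃ = s/4` turn
`F` into `s·(-(t² - 1) - (t⁻¹ - 1) - (t⁻⁴ - 1)/4)` and `G` into `(M/λ)·g` with `g = 2t + t⁻² - 3`;
`α` and `β` are chosen so that `αG² + βG = s·(-g²/4 - 3g/2)`, and the claim becomes a Laurent
polynomial identity in `t`.
-/

open Real

theorem neg_sq_div_four_sub_three_halves_mul {𝕜 : Type*} [Field 𝕜] [CharZero 𝕜] (t : 𝕜) :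
    -(2 * t + (t ^ 2)⁻¹ - 3) ^ 2 / 4 - 3 / 2 * (2 * t + (t ^ 2)⁻¹ - 3)
      = -(t ^ 2 - 1) - (t⁻¹ - 1) - ((t ^ 4)⁻¹ - 1) / 4 := by
  have hcross : t * (t ^ 2)⁻¹ = t⁻¹ := by
    rcases eq_or_ne t 0 with rfl | ht
    · simp
    · field_simp
  linear_combination (-1 : 𝕜) * hcross

theorem neg_sq_div_four_sub_three_halves_mul_rpow {y : ℝ} (hy : 0 ≤ y) :
    -(2 * y ^ ((1 : ℝ) / 2) + y ^ (-(1 : ℝ)) - 3) ^ 2 / 4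
        - 3 / 2 * (2 * y ^ ((1 : ℝ) / 2) + y ^ (-(1 : ℝ)) - 3)
      = -(y - 1) - (y ^ (-(1 : ℝ) / 2) - 1) - (y ^ (-(2 : ℝ)) - 1) / 4 := by
  have hpow (n : ℕ) : (y ^ ((1 : ℝ) / 2)) ^ n = y ^ ((n : ℝ) / 2) := by
    rw [← rpow_natCast, ← rpow_mul hy]
    ring_nf
  have hneg (n : ℕ) : y ^ (-((n : ℝ) / 2)) = ((y ^ ((1 : ℝ) / 2)) ^ n)⁻¹ := by
    rw [rpow_neg hy, hpow]
  have h₁ : y ^ (-(1 : ℝ) / 2) = (y ^ ((1 : ℝ) / 2))⁻¹ := by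
    simpa [neg_div] using hneg 1
  have h₂ : y ^ (-(1 : ℝ)) = ((y ^ ((1 : ℝ) / 2)) ^ 2)⁻¹ := by
    simpa using hneg 2
  have h₄ : y ^ (-(2 : ℝ)) = ((y ^ ((1 : ℝ) / 2)) ^ 4)⁻¹ := by
    convert hneg 4 using 2
    norm_num
  have hsq : (y ^ ((1 : ℝ) / 2)) ^ 2 = y := by
    rw [hpow]
    norm_num
  rw [h₁, h₂, h₄]
  set t := y ^ ((1 : ℝ) / 2)
  rw [← hsq]
  exact neg_sq_div_four_sub_three_halves_mul t

theorem three_reactions_lienard_composition_general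
    (c₁ d₂ d₃ K lam : ℝ) (hlam : lam ≠ 0) (hK : K ≠ 0)
    (κ₁ κ₂ κ₃ : ℝ)
    (hκne : κ₁ * κ₂ * κ₃ ≠ 0)
    (hcond₁ : c₁ * κ₁ = K * (d₂ * κ₂))
    (hcond₂ : c₁ * κ₁ = 4 * K * (d₃ * κ₃))
    (F G : ℝ → ℝ) (α β : ℝ)
    (hF : ∀ x : ℝ, -1 < x →
      F x = -(c₁ * κ₁) * x - K * (d₂ * κ₂) * ((x + 1) ^ (-(1 : ℝ) / 2) - 1)
            - K * (d₃ * κ₃) * ((x + 1) ^ (-(2 : ℝ)) - 1))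
    (hG : ∀ x : ℝ, -1 < x →
      G x = (1 / lam) * K * (κ₁ * κ₂ * κ₃)
            * (2 * (x + 1) ^ ((1 : ℝ) / 2) + (x + 1) ^ (-(1 : ℝ)) - 3))
    (hα : α = -(lam ^ 2 / 4) * (c₁ * κ₁) / (K * (κ₁ * κ₂ * κ₃)) ^ 2)
    (hβ : β = -(3 * lam / 2) * (c₁ * κ₁) / (K * (κ₁ * κ₂ * κ₃))) :
    ∀ x : ℝ, -1 < x → F x = α * (G x) ^ 2 + β * (G x) := by
  intro x hx
  set g := 2 * (x + 1) ^ ((1 : ℝ) / 2) + (x + 1) ^ (-(1 : ℝ)) - 3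
  have hGx : G x = K * (κ₁ * κ₂ * κ₃) / lam * g := by
    rw [hG x hx]
    ring
  have hΦ : α * (G x) ^ 2 + β * G x = c₁ * κ₁ * (-g ^ 2 / 4 - 3 / 2 * g) := by
    rw [hGx, hα, hβ]
    have hM : K * (κ₁ * κ₂ * κ₃) ≠ 0 := mul_ne_zero hK hκne
    generalize K * (κ₁ * κ₂ * κ₃) = M at hM ⊢
    field_simp
    ring
  have hF' : F x = c₁ * κ₁ * (-((x + 1) - 1) - ((x + 1) ^ (-(1 : ℝ) / 2) - 1)
      - ((x + 1) ^ (-(2 : ℝ)) - 1) / 4) := by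
    rw [hF x hx, ← hcond₁, show K * (d₃ * κ₃) = c₁ * κ₁ / 4 by linarith]
    ring
  rw [hF', hΦ, neg_sq_div_four_sub_three_halves_mul_rpow (by linarith)]

/-- The composition identity F = Φ∘G with Φ(z) = αz² + βz for the
Liénard form of the scaled three-reaction system with exponent points
(1,0), (0,−1/2), (0,−2). -/
theorem three_reactions_lienard_composition
    (c₁ d₁ c₂ d₂ c₃ d₃ K lam : ℝ) (hlam : lam ≠ 0) (hK : K ≠ 0)
    (κ₁ κ₂ κ₃ : ℝ)
    (hκ₁ : κ₁ = lam * (c₂ * d₃ - c₃ * d₂))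
    (hκ₂ : κ₂ = lam * (c₃ * d₁ - c₁ * d₃))
    (hκ₃ : κ₃ = lam * (c₁ * d₂ - c₂ * d₁))
    (hκne : κ₁ * κ₂ * κ₃ ≠ 0)
    (hcond₁ : c₁ * κ₁ = K * (d₂ * κ₂))
    (hcond₂ : c₁ * κ₁ = 4 * K * (d₃ * κ₃))
    (hcond₃ : c₁ * κ₁ ≠ 0)
    (F G : ℝ → ℝ) (α β : ℝ)
    (hF : ∀ x : ℝ, -1 < x →
      F x = -(c₁ * κ₁) * x - K * (d₂ * κ₂) * ((x + 1) ^ (-(1 : ℝ) / 2) - 1)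
            - K * (d₃ * κ₃) * ((x + 1) ^ (-(2 : ℝ)) - 1))
    (hG : ∀ x : ℝ, -1 < x →
      G x = (1 / lam) * K * (κ₁ * κ₂ * κ₃)
            * (2 * (x + 1) ^ ((1 : ℝ) / 2) + (x + 1) ^ (-(1 : ℝ)) - 3))
    (hα : α = -(lam ^ 2 / 4) * (c₁ * κ₁) / (K * (κ₁ * κ₂ * κ₃)) ^ 2)
    (hβ : β = -(3 * lam / 2) * (c₁ * κ₁) / (K * (κ₁ * κ₂ * κ₃))) :
    ∀ x : ℝ, -1 < x → F x = α * (G x) ^ 2 + β * (G x) :=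
  three_reactions_lienard_composition_general c₁ d₂ d₃ K lam hlam hK κ₁ κ₂ κ₃ hκne hcond₁ hcond₂ F G
    α β hF hG hα hβ
end
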